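/- arXiv:2201.02003 — 6 statements merged into one kernel-verified Lean document; each statement's English description precedes it below -/
import Mathlib

section
/- Let S be an 𝔽_q-subspace of 𝔽_{q^n} with dim_{𝔽_q}(S) = k ≥ 2, let μ ∈ 𝔽_{q^n} ∖ 𝔽_q, and let t = dim_{𝔽_q}(𝔽_q(μ)). Suppose dim_{𝔽_q}(S ∩ μS) = k−1 and t ≥ k. Then t ≠ k (so t > k) and there exists b ∈ 𝔽_{q^n} ∖ {0} such that S = b·⟨1, μ, …, μ^{k−1}⟩_{𝔽_q}. -/
/-!
Put `T₀ = S` and `Tᵢ₊₁ = S ∩ μTᵢ`, so that `Tᵢ = S ∩ μS ∩ ⋯ ∩ μⁱS`. Since `S ∩ μS` has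
codimension one in `S`, each step lowers the dimension by at most one, so `T_{k-1} ≠ 0`.
A nonzero `c ∈ T_{k-1}` is `μ^{k-1} b` with `b ∈ S`, and writing `c = μ^{k-1-j} sⱼ` with `sⱼ ∈ S`
gives `b μʲ = sⱼ ∈ S` for all `j < k`. As `1, μ, …, μ^{k-1}` are independent (`k ≤ t`), dimensions
force `S = b⟨1, μ, …, μ^{k-1}⟩`. If `t = k` this span is `𝔽_q(μ)`, so `μS = S`, contradicting
`dim (S ∩ μS) = k - 1`.
-/

open Submodule

/-- The span `⟨1, μ, …, μ^{m-1}⟩_{F_q}`. -/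
noncomputable def pows (Fq : Type*) {Fqn : Type*} [Field Fq] [Field Fqn] [Algebra Fq Fqn]
    (μ : Fqn) (m : ℕ) : Submodule Fq Fqn :=
  Submodule.span Fq (Set.range fun i : Fin m => μ ^ (i : ℕ))

/-- Multiplication of a subspace by a scalar: `b · W`. -/
noncomputable def bmul (Fq : Type*) {Fqn : Type*} [Field Fq] [Field Fqn] [Algebra Fq Fqn]
    (b : Fqn) (W : Submodule Fq Fqn) : Submodule Fq Fqn :=
  W.map (LinearMap.mulLeft Fq b)

open Module

section bmul

variable {Fq Fqn : Type*} [Field Fq] [Field Fqn] [Algebra Fq Fqn]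

theorem mem_bmul {b x : Fqn} {W : Submodule Fq Fqn} : x ∈ bmul Fq b W ↔ ∃ y ∈ W, b * y = x := by
  simp [bmul]

theorem finrank_bmul {b : Fqn} (hb : b ≠ 0) (W : Submodule Fq Fqn) :
    finrank Fq (bmul Fq b W) = finrank Fq W :=
  (equivMapOfInjective _ (mul_right_injective₀ hb) W).finrank_eq.symm

theorem bmul_one (W : Submodule Fq Fqn) : bmul Fq 1 W = W := by
  simp [bmul, LinearMap.mulLeft_one]

theorem bmul_bmul (a b : Fqn) (W : Submodule Fq Fqn) :
    bmul Fq a (bmul Fq b W) = bmul Fq (a * b) W := by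
  simp [bmul, LinearMap.mulLeft_mul, map_comp]

theorem bmul_mono (b : Fqn) {W W' : Submodule Fq Fqn} (h : W ≤ W') : bmul Fq b W ≤ bmul Fq b W' :=
  map_mono h

theorem bmul_toSubmodule_eq {A : Subalgebra Fq Fqn} [FiniteDimensional Fq A] {a : Fqn}
    (ha : a ∈ A) (ha0 : a ≠ 0) :
    bmul Fq a (Subalgebra.toSubmodule A) = Subalgebra.toSubmodule A := by
  refine eq_of_le_of_finrank_le ?_ (finrank_bmul ha0 _).ge
  rintro _ ⟨y, hy, rfl⟩
  exact A.mul_mem ha hy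

theorem bmul_pows_le_iff {b μ : Fqn} {m : ℕ} {S : Submodule Fq Fqn} :
    bmul Fq b (pows Fq μ m) ≤ S ↔ ∀ j < m, b * μ ^ j ∈ S := by
  rw [bmul, pows, map_span, span_le, ← Set.range_comp, Set.range_subset_iff]
  exact ⟨fun h j hj => h ⟨j, hj⟩, fun h i => h i i.isLt⟩

theorem finrank_pows {μ : Fqn} {m : ℕ} (hm : m ≤ (minpoly Fq μ).natDegree) :
    finrank Fq (pows Fq μ m) = m := by
  have hli : LinearIndependent Fq fun i : Fin m => μ ^ (i : ℕ) :=
    (linearIndependent_pow μ).comp (Fin.castLE hm) (Fin.castLE_injective hm)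
  rw [pows, finrank_span_eq_card hli, Fintype.card_fin]

theorem pows_natDegree_eq_adjoin {μ : Fqn} (hμ : IsIntegral Fq μ) :
    pows Fq μ (minpoly Fq μ).natDegree = Subalgebra.toSubmodule (Algebra.adjoin Fq {μ}) := by
  have : FiniteDimensional Fq (Algebra.adjoin Fq {μ}) := (Algebra.adjoin.powerBasis hμ).finite
  refine eq_of_le_of_finrank_le ?_ ?_
  · rw [pows, span_le]
    rintro _ ⟨i, rfl⟩
    exact Subalgebra.pow_mem _ (Algebra.self_mem_adjoin_singleton Fq μ) _
  · rw [finrank_pows le_rfl]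
    exact (Algebra.adjoin.powerBasis hμ).finrank.le

end bmul

theorem finrank_add_finrank_inf_le_of_le {K V : Type*} [DivisionRing K] [AddCommGroup V]
    [Module K V] {A B C : Submodule K V} (hAB : A ≤ B) [FiniteDimensional K B]
    [FiniteDimensional K C] :
    finrank K A + finrank K ↥(B ⊓ C) ≤ finrank K ↥(A ⊓ C) + finrank K B := by
  have : FiniteDimensional K A := finiteDimensional_of_le hAB
  have hA := finrank_sup_add_finrank_inf_eq A C
  have hB := finrank_sup_add_finrank_inf_eq B C
  have hsup := finrank_mono (sup_le_sup_right hAB C)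
  omega

section bmulChain

variable {Fq Fqn : Type*} [Field Fq] [Field Fqn] [Algebra Fq Fqn]

noncomputable def bmulChain (S : Submodule Fq Fqn) (μ : Fqn) : ℕ → Submodule Fq Fqn
  | 0 => S
  | i + 1 => S ⊓ bmul Fq μ (bmulChain S μ i)

variable {S : Submodule Fq Fqn} {μ : Fqn}

theorem bmulChain_le_self : ∀ i, bmulChain S μ i ≤ S
  | 0 => le_rfl
  | _ + 1 => inf_le_left

theorem bmulChain_le_bmul_pow : ∀ {i j : ℕ}, j ≤ i → bmulChain S μ i ≤ bmul Fq (μ ^ j) S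
  | _, 0, _ => by rw [pow_zero, bmul_one]; exact bmulChain_le_self _
  | i + 1, j + 1, h => calc
      bmulChain S μ (i + 1) ≤ bmul Fq μ (bmulChain S μ i) := inf_le_right
      _ ≤ bmul Fq μ (bmul Fq (μ ^ j) S) := bmul_mono μ (bmulChain_le_bmul_pow (by omega))
      _ = bmul Fq (μ ^ (j + 1)) S := by rw [bmul_bmul, pow_succ']

theorem finrank_le_finrank_bmulChain_add [FiniteDimensional Fq S] (hμ : μ ≠ 0) {d : ℕ}
    (hd : finrank Fq S ≤ finrank Fq ↥(S ⊓ bmul Fq μ S) + d) :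
    ∀ i, finrank Fq S ≤ finrank Fq (bmulChain S μ i) + i * d
  | 0 => by rw [zero_mul, add_zero]; exact le_rfl
  | i + 1 => by
    have : FiniteDimensional Fq (bmul Fq μ S) := Module.Finite.map S _
    have ih := finrank_le_finrank_bmulChain_add hμ hd i
    have step := finrank_add_finrank_inf_le_of_le (C := S)
      (bmul_mono μ (bmulChain_le_self (S := S) (μ := μ) i))
    rw [finrank_bmul hμ, finrank_bmul hμ, inf_comm (bmul Fq μ S) S,
      inf_comm (bmul Fq μ _) S] at step
    rw [bmulChain, Nat.succ_mul]
    omega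

theorem exists_mul_pow_mem [FiniteDimensional Fq S] (hμ : μ ≠ 0) (hS : 0 < finrank Fq S)
    (hcodim : finrank Fq S ≤ finrank Fq ↥(S ⊓ bmul Fq μ S) + 1) :
    ∃ b ≠ 0, ∀ j < finrank Fq S, b * μ ^ j ∈ S := by
  set m := finrank Fq S
  obtain ⟨c, hc, hc0⟩ : ∃ c ∈ bmulChain S μ (m - 1), c ≠ 0 := by
    refine exists_mem_ne_zero_of_ne_bot fun h => ?_
    have := finrank_le_finrank_bmulChain_add hμ hcodim (m - 1)
    rw [h, finrank_bot] at this
    omega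
  obtain ⟨b, hbS, rfl⟩ := mem_bmul.mp (bmulChain_le_bmul_pow le_rfl hc)
  refine ⟨b, by rintro rfl; simp at hc0, fun j hj => ?_⟩
  obtain ⟨s, hsS, hs⟩ := mem_bmul.mp (bmulChain_le_bmul_pow (Nat.sub_le (m - 1) j) hc)
  have hpow : μ ^ (m - 1 - j) * μ ^ j = μ ^ (m - 1) := by rw [← pow_add]; congr 1; omega
  have : s = b * μ ^ j :=
    mul_left_cancel₀ (pow_ne_zero (m - 1 - j) hμ) (by rw [hs, ← hpow]; ring)
  exact this ▸ hsS

end bmulChain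

theorem stmt2_general (Fq Fqn : Type*) [Field Fq] [Field Fqn] [Algebra Fq Fqn]
    (S : Submodule Fq Fqn) (k : ℕ) (hk : Module.finrank Fq ↥S = k) (hk2 : 2 ≤ k)
    (μ : Fqn) (hμ : μ ∉ Set.range (algebraMap Fq Fqn))
    (t : ℕ) (ht : Module.finrank Fq ↥(Algebra.adjoin Fq {μ}) = t)
    (hdim : Module.finrank Fq ↥(S ⊓ bmul Fq μ S) = k - 1) (htk : k ≤ t) :
    t ≠ k ∧ ∃ b : Fqn, b ≠ 0 ∧ S = bmul Fq b (pows Fq μ k) := by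
  have hμ0 : μ ≠ 0 := fun h => hμ ⟨0, h ▸ map_zero _⟩
  have : FiniteDimensional Fq S := .of_finrank_pos (by omega)
  have : FiniteDimensional Fq (Algebra.adjoin Fq {μ}) := .of_finrank_pos (by omega)
  have hint : IsIntegral Fq μ := .of_mem_of_fg _ (Module.Finite.iff_fg.mp ‹_›) μ
    (Algebra.self_mem_adjoin_singleton Fq μ)
  have hdeg : (minpoly Fq μ).natDegree = t := by
    rw [← ht, (Algebra.adjoin.powerBasis hint).finrank, Algebra.adjoin.powerBasis_dim]
  obtain ⟨b, hb0, hbS⟩ := exists_mul_pow_mem (S := S) hμ0 (by omega) (by omega)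
  have hS : S = bmul Fq b (pows Fq μ k) := by
    refine (eq_of_le_of_finrank_le (bmul_pows_le_iff.mpr (hk ▸ hbS)) ?_).symm
    rw [hk, finrank_bmul hb0, finrank_pows (m := k) (by omega)]
  refine ⟨fun htk' => ?_, b, hb0, hS⟩
  have hμS : bmul Fq μ S = S := by
    rw [hS, ← htk', ← hdeg, pows_natDegree_eq_adjoin hint, bmul_bmul, mul_comm, ← bmul_bmul,
      bmul_toSubmodule_eq (Algebra.self_mem_adjoin_singleton Fq μ) hμ0]
  rw [hμS, inf_idem, hk] at hdim
  omega

/-- Let `S` be a `k`-dimensional `F_q`-subspace of `F_{q^n}`, `k ≥ 2`,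
`μ ∈ F_{q^n} \ F_q`, `t = dim_{F_q} F_q(μ)`. If `dim_{F_q}(S ∩ μS) = k - 1` and `t ≥ k`,
then `t ≠ k` and `S = b·⟨1, μ, …, μ^{k-1}⟩_{F_q}` for some nonzero `b`. -/
theorem stmt2 (Fq Fqn : Type*) [Field Fq] [Field Fqn] [Algebra Fq Fqn] [Fintype Fq]
    (q n : ℕ) (hq : Fintype.card Fq = q) (hn : Module.finrank Fq Fqn = n)
    (S : Submodule Fq Fqn) (k : ℕ) (hk : Module.finrank Fq ↥S = k) (hk2 : 2 ≤ k)
    (μ : Fqn) (hμ : μ ∉ Set.range (algebraMap Fq Fqn))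
    (t : ℕ) (ht : Module.finrank Fq ↥(Algebra.adjoin Fq {μ}) = t)
    (hdim : Module.finrank Fq ↥(S ⊓ bmul Fq μ S) = k - 1) (htk : k ≤ t) :
    t ≠ k ∧ ∃ b : Fqn, b ≠ 0 ∧ S = bmul Fq b (pows Fq μ k) :=
  stmt2_general Fq Fqn S k hk hk2 μ hμ t ht hdim htk
end

section
/- Let k, r be integers with 1 ≤ r ≤ k−r, let S be an 𝔽_q-subspace of 𝔽_{q^n} with dim_{𝔽_q}(S) = k−r, let a₁, …, a_r ∈ 𝔽_{q^n} be 𝔽_q-linearly independent, let T = ⟨a₁, …, a_r⟩_{𝔽_q}, and let U = S × T. Then the set of points of weight r in L_U different from ⟨(1,0)⟩_{𝔽_{q^n}} is exactly { ⟨(ξ,1)⟩_{𝔽_{q^n}} : ξ ∈ a₁^{−1}S ∩ … ∩ a_r^{−1}S }, and its cardinality is q^j, where j = dim_{𝔽_q}(a₁^{−1}S ∩ … ∩ a_r^{−1}S). -/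
open Submodule

/-- The `F_q`-linear set in `PG(1, q^n)` defined by an `F_q`-subspace `U` of `F_{q^n}²`:
the set of projective points `⟨v⟩_{F_{q^n}}`, `v ∈ U \ {0}`, viewed as
one-dimensional `F_{q^n}`-subspaces of `F_{q^n}²`. -/
def linSet {Fq Fqn : Type*} [Field Fq] [Field Fqn] [Algebra Fq Fqn]
    (U : Submodule Fq (Fqn × Fqn)) : Set (Submodule Fqn (Fqn × Fqn)) :=
  {P | ∃ v : Fqn × Fqn, v ≠ 0 ∧ v ∈ U ∧ P = Submodule.span Fqn {v}}

/-- The weight of a projective point `P` in the linear set defined by `U`: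
`w_{L_U}(P) = dim_{F_q}(U ∩ P)`. -/
noncomputable def weight {Fq Fqn : Type*} [Field Fq] [Field Fqn] [Algebra Fq Fqn]
    (U : Submodule Fq (Fqn × Fqn)) (P : Submodule Fqn (Fqn × Fqn)) : ℕ :=
  Module.finrank Fq ↥(U ⊓ P.restrictScalars Fq)

/-!
Every point of `L_{S × T}` other than `⟨(1, 0)⟩` is `⟨(ξ, 1)⟩` for a unique `ξ`, and
`(S × T) ∩ ⟨(ξ, 1)⟩` is the graph of `λ ↦ ξλ` over `{λ ∈ T : ξλ ∈ S}`. Hence the weight of `⟨(ξ, 1)⟩`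
reaches `dim T = r` exactly when `ξT ⊆ S`, i.e. when `ξ ∈ a₁⁻¹S ∩ … ∩ a_r⁻¹S`, and these points
are in bijection with that subspace.
-/

section LinearSetOfProduct

variable {K L : Type*} [Field K] [Field L] [Algebra K L]

theorem span_singleton_mk_one_injective :
    Function.Injective fun ξ : L => span L {(ξ, (1 : L))} := by
  intro ξ₁ ξ₂ (h : span L {(ξ₁, (1 : L))} = span L {(ξ₂, (1 : L))})
  have hmem : (ξ₁, (1 : L)) ∈ span L {(ξ₂, (1 : L))} := h ▸ mem_span_singleton_self _
  obtain ⟨c, hc⟩ := mem_span_singleton.1 hmem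
  have hc1 : c = 1 := by simpa using congrArg Prod.snd hc
  simpa [hc1] using (congrArg Prod.fst hc).symm

theorem span_singleton_mk_one_ne (ξ : L) :
    span L {(ξ, (1 : L))} ≠ span L {((1 : L), (0 : L))} := by
  intro h
  obtain ⟨c, hc⟩ := mem_span_singleton.1 (h ▸ mem_span_singleton_self (ξ, (1 : L)))
  simpa using congrArg Prod.snd hc

theorem span_singleton_mk_zero {s : L} (hs : s ≠ 0) :
    span L {(s, (0 : L))} = span L {((1 : L), (0 : L))} := by
  simpa using span_singleton_smul_eq (IsUnit.mk0 s hs) ((1 : L), (0 : L))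

theorem span_singleton_eq_span_mk_one {s t : L} (ht : t ≠ 0) :
    span L {(s, t)} = span L {(s * t⁻¹, (1 : L))} := by
  rw [← span_singleton_smul_eq (IsUnit.mk0 t ht) (s * t⁻¹, (1 : L)), Prod.smul_mk, smul_eq_mul,
    smul_eq_mul, mul_one, mul_left_comm, mul_inv_cancel₀ ht, mul_one]

theorem prod_inf_span_mk_one (S T : Submodule K L) (ξ : L) :
    S.prod T ⊓ (span L {(ξ, (1 : L))}).restrictScalars K =
      (T ⊓ S.comap (LinearMap.mulLeft K ξ)).map ((LinearMap.mulLeft K ξ).prod LinearMap.id) := by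
  ext ⟨x, y⟩
  simp only [mem_inf, restrictScalars_mem, mem_map, mem_prod, mem_span_singleton, mem_comap,
    LinearMap.prod_apply, Function.prod, LinearMap.mulLeft_apply, LinearMap.id_apply,
    Prod.smul_mk, smul_eq_mul, mul_one, Prod.mk.injEq]
  constructor
  · rintro ⟨⟨hx, hy⟩, c, rfl, rfl⟩
    exact ⟨c, ⟨hy, by rwa [mul_comm]⟩, mul_comm _ _, rfl⟩
  · rintro ⟨c, ⟨hc, hξc⟩, rfl, rfl⟩
    exact ⟨⟨hξc, hc⟩, c, mul_comm _ _, rfl⟩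

theorem weight_prod_span_mk_one (S T : Submodule K L) (ξ : L) :
    weight (S.prod T) (span L {(ξ, (1 : L))}) =
      Module.finrank K ↥(T ⊓ S.comap (LinearMap.mulLeft K ξ)) := by
  have hinj : Function.Injective ((LinearMap.mulLeft K ξ).prod (LinearMap.id : L →ₗ[K] L)) :=
    fun _ _ h => congrArg Prod.snd h
  rw [weight, prod_inf_span_mk_one]
  exact (LinearEquiv.finrank_eq (equivMapOfInjective _ hinj _)).symm

theorem weight_prod_span_mk_one_eq_finrank_iff (S T : Submodule K L) [FiniteDimensional K T]
    (ξ : L) :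
    weight (S.prod T) (span L {(ξ, (1 : L))}) = Module.finrank K T ↔
      T ≤ S.comap (LinearMap.mulLeft K ξ) := by
  rw [weight_prod_span_mk_one, ← inf_eq_left]
  exact ⟨eq_of_le_of_finrank_eq inf_le_left, fun h => by rw [h]⟩

theorem setOf_weight_eq_finrank_prod {S T I : Submodule K L} [FiniteDimensional K T]
    (hT : T ≠ ⊥) (hI : ∀ ξ, ξ ∈ I ↔ T ≤ S.comap (LinearMap.mulLeft K ξ)) :
    {P | P ∈ linSet (S.prod T) ∧ weight (S.prod T) P = Module.finrank K T ∧
        P ≠ span L {((1 : L), (0 : L))}} =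
      {P | ∃ ξ ∈ I, P = span L {(ξ, (1 : L))}} := by
  ext P
  constructor
  · rintro ⟨⟨⟨s, t⟩, hv0, hv, rfl⟩, hw, hne⟩
    have ht : t ≠ 0 := by
      rintro rfl
      exact hne (span_singleton_mk_zero fun hs => hv0 (by rw [hs, Prod.mk_zero_zero]))
    rw [span_singleton_eq_span_mk_one ht] at hw ⊢
    exact ⟨_, (hI _).2 ((weight_prod_span_mk_one_eq_finrank_iff S T _).1 hw), rfl⟩
  · rintro ⟨ξ, hξ, rfl⟩
    have hTS := (hI ξ).1 hξ
    obtain ⟨t, htT, ht0⟩ := exists_mem_ne_zero_of_ne_bot hT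
    refine ⟨⟨(ξ * t, t), fun h => ht0 (congrArg Prod.snd h), mem_prod.2 ⟨hTS htT, htT⟩, ?_⟩,
      (weight_prod_span_mk_one_eq_finrank_iff S T ξ).2 hTS, span_singleton_mk_one_ne ξ⟩
    rw [span_singleton_eq_span_mk_one ht0, mul_inv_cancel_right₀ ht0]

theorem ncard_setOf_span_mk_one (I : Submodule K L) [FiniteDimensional K I] :
    {P | ∃ ξ ∈ I, P = span L {(ξ, (1 : L))}}.ncard = Nat.card K ^ Module.finrank K I := by
  have himage : {P | ∃ ξ ∈ I, P = span L {(ξ, (1 : L))}} =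
      (fun ξ : L => span L {(ξ, (1 : L))}) '' I := by
    ext P
    simp only [Set.mem_image, SetLike.mem_coe, eq_comm, Set.mem_ofPred]
  rw [himage, Set.ncard_image_of_injective _ span_singleton_mk_one_injective,
    ← Nat.card_coe_set_eq]
  exact Module.natCard_eq_pow_finrank

instance bmul.finiteDimensional (b : L) (W : Submodule K L) [FiniteDimensional K W] :
    FiniteDimensional K (bmul K b W) := by
  unfold bmul
  infer_instance

theorem mem_iInf_bmul_inv_iff {ι : Type*} {a : ι → L} (ha : ∀ i, a i ≠ 0) (S : Submodule K L)
    (ξ : L) :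
    ξ ∈ ⨅ i, bmul K (a i)⁻¹ S ↔ span K (Set.range a) ≤ S.comap (LinearMap.mulLeft K ξ) := by
  simp only [mem_iInf, bmul, mem_map, LinearMap.mulLeft_apply, span_le, Set.range_subset_iff,
    SetLike.mem_coe, mem_comap]
  refine forall_congr' fun i => ⟨?_, fun h => ⟨_, h, ?_⟩⟩
  · rintro ⟨s, hs, rfl⟩
    rwa [mul_comm, ← mul_assoc, mul_inv_cancel₀ (ha i), one_mul]
  · rw [mul_comm ξ, inv_mul_cancel_left₀ (ha i)]

end LinearSetOfProduct

theorem stmt4_general (Fq Fqn : Type*) [Field Fq] [Field Fqn] [Algebra Fq Fqn] [Fintype Fq]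
    (q : ℕ) (hq : Fintype.card Fq = q)
    (k r : ℕ) (hr : 1 ≤ r) (hkr : 2 * r ≤ k)
    (S : Submodule Fq Fqn) (hS : Module.finrank Fq ↥S = k - r)
    (a : Fin r → Fqn) (ha : LinearIndependent Fq a)
    (T : Submodule Fq Fqn) (hT : T = Submodule.span Fq (Set.range a))
    (U : Submodule Fq (Fqn × Fqn)) (hU : U = S.prod T)
    (I : Submodule Fq Fqn) (hI : I = ⨅ i : Fin r, bmul Fq (a i)⁻¹ S) :
    {P | P ∈ linSet U ∧ weight U P = r ∧ P ≠ Submodule.span Fqn {((1 : Fqn), (0 : Fqn))}}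
        = {P | ∃ ξ ∈ I, P = Submodule.span Fqn {(ξ, (1 : Fqn))}} ∧
      Set.ncard
        {P | P ∈ linSet U ∧ weight U P = r ∧ P ≠ Submodule.span Fqn {((1 : Fqn), (0 : Fqn))}}
        = q ^ Module.finrank Fq ↥I := by
  subst hT hU hI
  have hTr : Module.finrank Fq (span Fq (Set.range a)) = r := by
    rw [finrank_span_eq_card ha, Fintype.card_fin]
  have hT0 : span Fq (Set.range a) ≠ ⊥ :=
    (Submodule.ne_bot_iff _).2 ⟨a ⟨0, hr⟩, subset_span ⟨_, rfl⟩, ha.ne_zero _⟩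
  have : FiniteDimensional Fq (span Fq (Set.range a)) :=
    FiniteDimensional.span_of_finite Fq (Set.finite_range a)
  have : FiniteDimensional Fq S := .of_finrank_pos (by omega)
  have : FiniteDimensional Fq ↥(⨅ i, bmul Fq (a i)⁻¹ S) :=
    finiteDimensional_of_le (iInf_le _ (⟨0, hr⟩ : Fin r))
  have hset := setOf_weight_eq_finrank_prod hT0 (mem_iInf_bmul_inv_iff ha.ne_zero S)
  rw [hTr] at hset
  refine ⟨hset, ?_⟩
  rw [hset, ncard_setOf_span_mk_one, ← hq, Nat.card_eq_fintype_card]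

/-- Let `1 ≤ r ≤ k - r`, `S` an `F_q`-subspace of `F_{q^n}` of dimension
`k - r`, `a₁, …, a_r` `F_q`-linearly independent, `T = ⟨a₁, …, a_r⟩_{F_q}`, `U = S × T`.
Then the set of points of weight `r` in `L_U` different from `⟨(1,0)⟩` is exactly
`{⟨(ξ,1)⟩ : ξ ∈ a₁⁻¹S ∩ … ∩ a_r⁻¹S}`, and its cardinality is `q^j` with
`j = dim_{F_q}(a₁⁻¹S ∩ … ∩ a_r⁻¹S)`. -/
theorem stmt4 (Fq Fqn : Type*) [Field Fq] [Field Fqn] [Algebra Fq Fqn] [Fintype Fq]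
    (q n : ℕ) (hq : Fintype.card Fq = q) (hn : Module.finrank Fq Fqn = n)
    (k r : ℕ) (hr : 1 ≤ r) (hkr : 2 * r ≤ k)
    (S : Submodule Fq Fqn) (hS : Module.finrank Fq ↥S = k - r)
    (a : Fin r → Fqn) (ha : LinearIndependent Fq a)
    (T : Submodule Fq Fqn) (hT : T = Submodule.span Fq (Set.range a))
    (U : Submodule Fq (Fqn × Fqn)) (hU : U = S.prod T)
    (I : Submodule Fq Fqn) (hI : I = ⨅ i : Fin r, bmul Fq (a i)⁻¹ S) :
    {P | P ∈ linSet U ∧ weight U P = r ∧ P ≠ Submodule.span Fqn {((1 : Fqn), (0 : Fqn))}}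
        = {P | ∃ ξ ∈ I, P = Submodule.span Fqn {(ξ, (1 : Fqn))}} ∧
      Set.ncard
        {P | P ∈ linSet U ∧ weight U P = r ∧ P ≠ Submodule.span Fqn {((1 : Fqn), (0 : Fqn))}}
        = q ^ Module.finrank Fq ↥I :=
  stmt4_general Fq Fqn q hq k r hr hkr S hS a ha T hT U hU I hI
end

section
/- Let ℓ', t > 1 be integers with n = ℓ'·t, and identify 𝔽_{q^t} with the subfield of 𝔽_{q^n} of order q^t. Let U' ≠ {0} be an 𝔽_q-subspace of 𝔽_{q^t}² with dim_{𝔽_q}(U') = m, and let L_{U'} = {⟨u⟩_{𝔽_{q^t}} : u ∈ U'∖{0}} ⊆ PG(1,q^t), with weights computed over 𝔽_{q^t}. Let S̄ be an 𝔽_{q^t}-subspace of 𝔽_{q^n} with dim_{𝔽_{q^t}}(S̄) = ℓ, where 0 ≤ ℓ < ℓ', and let b ∈ 𝔽_{q^n} ∖ {0} with S̄ ∩ b·𝔽_{q^t} = {0}. Let U = {(s + b·u₁, u₂) : s ∈ S̄, (u₁, u₂) ∈ U'} ⊆ 𝔽_{q^n}². Then: (i) dim_{𝔽_q}(U) = ℓt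 + m; (ii) w_{L_U}(⟨(1,0)⟩_{𝔽_{q^n}}) = tℓ + w_{L_{U'}}(⟨(1,0)⟩_{𝔽_{q^t}}), where w_{L_{U'}}(⟨(1,0)⟩_{𝔽_{q^t}}) = dim_{𝔽_q}(U' ∩ (𝔽_{q^t} × {0})); (iii) for every integer i ≥ 1, the number of points of L_U different from ⟨(1,0)⟩_{𝔽_{q^n}} having weight i in L_U equals q^{ℓt} times the number of points of L_{U'} different from ⟨(1,0)⟩_{𝔽_{q^t}} having weight i in L_{U'}; in particular |L_U ∖ {⟨(1,0)⟩_{𝔽_{q^n}}}| = q^{ℓt}·|L_{U'} ∖ {⟨(1,0)⟩_{𝔽_{q^t}}}|. -/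
open Submodule

lemma finrank_map_of_inj {K M N : Type*} [Field K] [AddCommGroup M] [Module K M]
    [AddCommGroup N] [Module K N] (f : M →ₗ[K] N) (W : Submodule K M)
    (h : ∀ x ∈ W, f x = 0 → x = 0) :
    Module.finrank K ↥(W.map f) = Module.finrank K ↥W := by
  have hinj : Function.Injective (f.domRestrict W) := by
    rw [← LinearMap.ker_eq_bot, eq_bot_iff]
    rintro ⟨x, hx⟩ hker
    simp only [LinearMap.mem_ker, LinearMap.domRestrict_apply] at hker
    simpa using h x hx hker
  rw [← LinearMap.range_domRestrict]
  exact (LinearEquiv.finrank_eq (LinearEquiv.ofInjective _ hinj)).symm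

lemma mem_span_one_zero {K : Type*} [Field K] (x : K × K) :
    x ∈ Submodule.span K {((1 : K), (0 : K))} ↔ x.2 = 0 := by
  rw [Submodule.mem_span_singleton]
  constructor
  · rintro ⟨a, rfl⟩; simp
  · intro h
    exact ⟨x.1, by ext <;> simp [h]⟩

lemma span_slope {K : Type*} [Field K] (v : K × K) (h : v.2 ≠ 0) :
    Submodule.span K {v} = Submodule.span K {(v.1 * v.2⁻¹, (1 : K))} := by
  have : (v.1 * v.2⁻¹, (1 : K)) = v.2⁻¹ • v := by
    ext <;> simp [smul_eq_mul, mul_comm, (mul_inv_cancel₀ h).symm]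
  rw [this, Submodule.span_singleton_smul_eq (IsUnit.mk0 _ (inv_ne_zero h)) v]

lemma span_second_zero {K : Type*} [Field K] (v : K × K) (h0 : v ≠ 0) (h : v.2 = 0) :
    Submodule.span K {v} = Submodule.span K {((1 : K), (0 : K))} := by
  have h1 : v.1 ≠ 0 := by
    intro hc; exact h0 (by ext <;> simp [hc, h])
  have : v = v.1 • ((1 : K), (0 : K)) := by ext <;> simp [h]
  rw [this, Submodule.span_singleton_smul_eq (IsUnit.mk0 _ h1)]

lemma span_slope_inj {K : Type*} [Field K] {x y : K}
    (h : Submodule.span K {(x, (1 : K))} = Submodule.span K {(y, (1 : K))}) : x = y := by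
  have : (x, (1 : K)) ∈ Submodule.span K {(y, (1 : K))} := by
    rw [← h]; exact Submodule.mem_span_singleton_self _
  rw [Submodule.mem_span_singleton] at this
  obtain ⟨a, ha⟩ := this
  have ha2 : a = 1 := by simpa using congrArg Prod.snd ha
  exact (by simpa [ha2] using congrArg Prod.fst ha : y = x).symm

lemma span_slope_ne {K : Type*} [Field K] (x : K) :
    Submodule.span K {(x, (1 : K))} ≠ Submodule.span K {((1 : K), (0 : K))} := by
  intro h
  have : (x, (1 : K)) ∈ Submodule.span K {((1 : K), (0 : K))} := by
    rw [← h]; exact Submodule.mem_span_singleton_self _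
  rw [mem_span_one_zero] at this
  exact one_ne_zero this

/-- Tower `F_q ⊆ F_{q^t} ⊆ F_{q^n}`, `n = ℓ'·t`, `U'` an `F_q`-subspace
of `F_{q^t}²` of dimension `m`, `S̄` an `F_{q^t}`-subspace of `F_{q^n}` of dimension
`ℓ < ℓ'`, `b ≠ 0` with `S̄ ∩ b·F_{q^t} = {0}`, and
`U = {(s + b·u₁, u₂) : s ∈ S̄, (u₁, u₂) ∈ U'}`. Then `dim_{F_q} U = ℓt + m`, the point
`⟨(1,0)⟩` has weight `tℓ + w_{L_{U'}}(⟨(1,0)⟩)`, for each `i ≥ 1` the number of points of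
`L_U` different from `⟨(1,0)⟩` of weight `i` is `q^{ℓt}` times the corresponding number
for `L_{U'}`, and `|L_U \ {⟨(1,0)⟩}| = q^{ℓt}·|L_{U'} \ {⟨(1,0)⟩}|`. -/
theorem stmt11 (Fq Fqt Fqn : Type*) [Field Fq] [Field Fqt] [Field Fqn]
    [Algebra Fq Fqt] [Algebra Fqt Fqn] [Algebra Fq Fqn] [IsScalarTower Fq Fqt Fqn]
    [Fintype Fq] (q n t l' : ℕ) (hq : Fintype.card Fq = q)
    (ht : Module.finrank Fq Fqt = t) (hl' : Module.finrank Fqt Fqn = l') (hn : n = l' * t)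
    (ht1 : 1 < t) (hl'1 : 1 < l')
    (U' : Submodule Fq (Fqt × Fqt)) (hU'ne : U' ≠ ⊥)
    (m : ℕ) (hm : Module.finrank Fq ↥U' = m)
    (Sbar : Submodule Fqt Fqn) (l : ℕ) (hl : Module.finrank Fqt ↥Sbar = l) (hll' : l < l')
    (b : Fqn) (hb : b ≠ 0)
    (hdisj : ∀ x ∈ Sbar, (∃ c : Fqt, x = b * algebraMap Fqt Fqn c) → x = 0)
    (U : Submodule Fq (Fqn × Fqn))
    (hU : (U : Set (Fqn × Fqn)) =
      {p | ∃ s ∈ Sbar, ∃ u ∈ U',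
        p = (s + b * algebraMap Fqt Fqn u.1, algebraMap Fqt Fqn u.2)}) :
    Module.finrank Fq ↥U = l * t + m ∧
    weight U (Submodule.span Fqn {((1 : Fqn), (0 : Fqn))})
      = t * l + weight U' (Submodule.span Fqt {((1 : Fqt), (0 : Fqt))}) ∧
    (∀ i : ℕ, 1 ≤ i →
      Set.ncard
          {P | P ∈ linSet U ∧ weight U P = i ∧
            P ≠ Submodule.span Fqn {((1 : Fqn), (0 : Fqn))}}
        = q ^ (l * t) *
          Set.ncard
            {P | P ∈ linSet U' ∧ weight U' P = i ∧
              P ≠ Submodule.span Fqt {((1 : Fqt), (0 : Fqt))}}) ∧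
    Set.ncard (linSet U \ {Submodule.span Fqn {((1 : Fqn), (0 : Fqn))}})
      = q ^ (l * t) * Set.ncard (linSet U' \ {Submodule.span Fqt {((1 : Fqt), (0 : Fqt))}}) := by
  -- instances
  haveI : FiniteDimensional Fq Fqt := .of_finrank_pos (by omega : 0 < Module.finrank Fq Fqt)
  haveI : FiniteDimensional Fqt Fqn := .of_finrank_pos (by omega : 0 < Module.finrank Fqt Fqn)
  haveI : FiniteDimensional Fq Fqn := FiniteDimensional.trans Fq Fqt Fqn
  have hai : Function.Injective (algebraMap Fqt Fqn) := (algebraMap Fqt Fqn).injective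
  have hUmem : ∀ p : Fqn × Fqn, p ∈ U ↔ ∃ s ∈ Sbar, ∃ u ∈ U',
      p = (s + b * algebraMap Fqt Fqn u.1, algebraMap Fqt Fqn u.2) := by
    intro p
    rw [← SetLike.mem_coe, hU]; rfl
  have hsmul : ∀ (c : Fqt) (x : Fqn), c • x = algebraMap Fqt Fqn c * x := fun c x =>
    Algebra.smul_def c x
  -- the linear maps
  set algl : Fqt →ₗ[Fq] Fqn := (IsScalarTower.toAlgHom Fq Fqt Fqn).toLinearMap with halgl
  have halgl_apply : ∀ c : Fqt, algl c = algebraMap Fqt Fqn c := fun _ => rfl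
  set J : Fqn →ₗ[Fq] Fqn × Fqn := LinearMap.inl Fq Fqn Fqn with hJ
  set G : (Fqt × Fqt) →ₗ[Fq] Fqn × Fqn :=
    ((LinearMap.mulLeft Fq b).comp (algl.comp (LinearMap.fst Fq Fqt Fqt))).prod
      (algl.comp (LinearMap.snd Fq Fqt Fqt)) with hG
  have hG_apply : ∀ u : Fqt × Fqt,
      G u = (b * algebraMap Fqt Fqn u.1, algebraMap Fqt Fqn u.2) := fun _ => rfl
  set V : Submodule Fq (Fqn × Fqn) := (Sbar.restrictScalars Fq).map J with hV
  have hGinj : ∀ u : Fqt × Fqt, G u = 0 → u = 0 := by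
    intro u hu
    rw [hG_apply, Prod.ext_iff] at hu
    obtain ⟨h1, h2⟩ := hu
    have hu2 : u.2 = 0 := hai (by simpa using h2)
    have hu1 : u.1 = 0 := hai (by
      rcases mul_eq_zero.1 h1 with h | h
      · exact absurd h hb
      · simpa using h)
    ext <;> simp [hu1, hu2]
  have hVW_disj : ∀ x, x ∈ V → x ∈ U'.map G → x = 0 := by
    intro x hxV hxW
    obtain ⟨s, hs, rfl⟩ := hxV
    obtain ⟨u, hu, hux⟩ := hxW
    rw [hG_apply, Prod.ext_iff] at hux
    simp only [hJ, LinearMap.coe_inl] at hux ⊢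
    obtain ⟨h1, h2⟩ := hux
    have hs0 : s = 0 := hdisj s hs ⟨u.1, h1.symm⟩
    simp [hs0]
  have hfinV : Module.finrank Fq ↥V = t * l := by
    rw [hV, finrank_map_of_inj J _ (by intro x _ hx; simpa [hJ] using congrArg Prod.fst hx)]
    have he : Module.finrank Fq ↥(Sbar.restrictScalars Fq) = Module.finrank Fq ↥Sbar :=
      LinearEquiv.finrank_eq
        ((Submodule.restrictScalarsEquiv Fq Fqt Fqn Sbar).restrictScalars Fq)
    rw [he, ← Module.finrank_mul_finrank Fq Fqt ↥Sbar, ht, hl]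
  have hfinW : Module.finrank Fq ↥(U'.map G) = m := by
    rw [finrank_map_of_inj G _ (fun x _ hx => hGinj x hx), hm]
  have hUsup : U = V ⊔ U'.map G := by
    apply le_antisymm
    · intro x hx
      obtain ⟨s, hs, u, hu, rfl⟩ := (hUmem x).1 hx
      apply Submodule.mem_sup.2
      refine ⟨(s, 0), ⟨s, hs, rfl⟩, G u, Submodule.mem_map_of_mem hu, ?_⟩
      rw [hG_apply]; ext <;> simp
    · apply sup_le
      · rintro x ⟨s, hs, rfl⟩
        exact (hUmem _).2 ⟨s, hs, 0, Submodule.zero_mem U', by simp [hJ]⟩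
      · rintro x ⟨u, hu, rfl⟩
        exact (hUmem _).2 ⟨0, Submodule.zero_mem Sbar, u, hu, by rw [hG_apply]; simp⟩
  have hfinU : Module.finrank Fq ↥U = l * t + m := by
    rw [hUsup]
    have h0 : V ⊓ U'.map G = ⊥ := by
      rw [eq_bot_iff]; rintro x ⟨hx1, hx2⟩; exact hVW_disj x hx1 hx2
    have h2 := Submodule.finrank_sup_add_finrank_inf_eq V (U'.map G)
    rw [h0, finrank_bot, add_zero, hfinV, hfinW] at h2
    rw [h2, Nat.mul_comm t l]
  refine ⟨hfinU, ?_, ?_⟩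
  · -- part (ii)
    have hP0 : ∀ x : Fqn × Fqn,
        x ∈ (Submodule.span Fqn {((1:Fqn),(0:Fqn))}).restrictScalars Fq ↔ x.2 = 0 := by
      intro x; rw [Submodule.restrictScalars_mem]; exact mem_span_one_zero x
    have hP0' : ∀ u : Fqt × Fqt,
        u ∈ (Submodule.span Fqt {((1:Fqt),(0:Fqt))}).restrictScalars Fq ↔ u.2 = 0 := by
      intro u; rw [Submodule.restrictScalars_mem]; exact mem_span_one_zero u
    set W'' := U' ⊓ (Submodule.span Fqt {((1:Fqt),(0:Fqt))}).restrictScalars Fq with hW''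
    have hclaim : U ⊓ (Submodule.span Fqn {((1:Fqn),(0:Fqn))}).restrictScalars Fq
        = V ⊔ W''.map G := by
      apply le_antisymm
      · rintro x ⟨hxU, hxP⟩
        obtain ⟨s, hs, u, hu, rfl⟩ := (hUmem x).1 hxU
        have hx2 : algebraMap Fqt Fqn u.2 = 0 := (hP0 _).1 hxP
        have hu2 : u.2 = 0 := hai (by simpa using hx2)
        apply Submodule.mem_sup.2
        refine ⟨(s, 0), ⟨s, hs, rfl⟩, G u, Submodule.mem_map_of_mem ⟨hu, (hP0' u).2 hu2⟩, ?_⟩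
        rw [hG_apply]; ext <;> simp [hx2]
      · apply sup_le
        · rintro x ⟨s, hs, rfl⟩
          exact ⟨(hUmem _).2 ⟨s, hs, 0, U'.zero_mem, by simp [hJ]⟩, (hP0 _).2 rfl⟩
        · rintro x ⟨u, ⟨huU, huP⟩, rfl⟩
          refine ⟨(hUmem _).2 ⟨0, Sbar.zero_mem, u, huU, by rw [hG_apply]; simp⟩, ?_⟩
          exact (hP0 (G u)).2 (by simp [hG_apply, (hP0' u).1 huP])
    rw [weight, hclaim]
    have h0 : V ⊓ W''.map G = ⊥ := by
      rw [eq_bot_iff]; rintro x ⟨hx1, hx2⟩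
      exact hVW_disj x hx1 (Submodule.map_mono inf_le_left hx2)
    have h2 := Submodule.finrank_sup_add_finrank_inf_eq V (W''.map G)
    rw [h0, finrank_bot, add_zero, hfinV] at h2
    rw [h2, finrank_map_of_inj G _ (fun x _ hx => hGinj x hx)]
    rfl
  -- common machinery for (iii) and (iv)
  have hfinSbar : Module.finrank Fq ↥Sbar = t * l := by
    rw [← Module.finrank_mul_finrank Fq Fqt ↥Sbar, ht, hl]
  have hls : ∀ c : Fqn, (Submodule.span Fqn {(c, (1:Fqn))} ∈ linSet U
      ↔ ∃ lam : Fqn, lam ≠ 0 ∧ (lam * c, lam) ∈ U) := by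
    intro c
    constructor
    · rintro ⟨v, hv0, hvU, hsp⟩
      have hv : v ∈ Submodule.span Fqn {(c, (1:Fqn))} := by
        rw [hsp]; exact Submodule.mem_span_singleton_self v
      rw [Submodule.mem_span_singleton] at hv
      obtain ⟨a, rfl⟩ := hv
      have ha : a ≠ 0 := by rintro rfl; simp at hv0
      refine ⟨a, ha, ?_⟩
      have : a • ((c, (1:Fqn))) = (a * c, a) := by ext <;> simp [smul_eq_mul]
      rwa [this] at hvU
    · rintro ⟨lam, hlam, hmem⟩
      refine ⟨(lam * c, lam), by simp [Prod.ext_iff, hlam], hmem, ?_⟩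
      have h1 := span_slope ((lam * c, lam) : Fqn × Fqn) hlam
      have hc : (lam * c) * lam⁻¹ = c := by
        rw [mul_comm lam c, mul_assoc, mul_inv_cancel₀ hlam, mul_one]
      rw [h1]
      simp [hc]
  have hls' : ∀ x : Fqt, (Submodule.span Fqt {(x, (1:Fqt))} ∈ linSet U'
      ↔ ∃ mu : Fqt, mu ≠ 0 ∧ (mu * x, mu) ∈ U') := by
    intro x
    constructor
    · rintro ⟨v, hv0, hvU, hsp⟩
      have hv : v ∈ Submodule.span Fqt {(x, (1:Fqt))} := by
        rw [hsp]; exact Submodule.mem_span_singleton_self v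
      rw [Submodule.mem_span_singleton] at hv
      obtain ⟨a, rfl⟩ := hv
      have ha : a ≠ 0 := by rintro rfl; simp at hv0
      refine ⟨a, ha, ?_⟩
      have : a • ((x, (1:Fqt))) = (a * x, a) := by ext <;> simp [smul_eq_mul]
      rwa [this] at hvU
    · rintro ⟨mu, hmu, hmem⟩
      refine ⟨(mu * x, mu), by simp [Prod.ext_iff, hmu], hmem, ?_⟩
      have h1 := span_slope ((mu * x, mu) : Fqt × Fqt) hmu
      have hc : (mu * x) * mu⁻¹ = x := by
        rw [mul_comm mu x, mul_assoc, mul_inv_cancel₀ hmu, mul_one]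
      rw [h1]
      simp [hc]
  set gc : Fqn → (Fqn →ₗ[Fq] Fqn × Fqn) :=
    fun c => (LinearMap.mulRight Fq c).prod LinearMap.id with hgc
  have hgc_apply : ∀ c lam : Fqn, gc c lam = (lam * c, lam) := fun _ _ => rfl
  set gc' : Fqt → (Fqt →ₗ[Fq] Fqt × Fqt) :=
    fun x => (LinearMap.mulRight Fq x).prod LinearMap.id with hgc'
  have hgc'_apply : ∀ x mu : Fqt, gc' x mu = (mu * x, mu) := fun _ _ => rfl
  have hwT : ∀ c : Fqn, weight U (Submodule.span Fqn {(c, (1:Fqn))})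
      = Module.finrank Fq ↥(Submodule.comap (gc c) U) := by
    intro c
    have hEq : U ⊓ (Submodule.span Fqn {(c, (1:Fqn))}).restrictScalars Fq
        = (Submodule.comap (gc c) U).map (gc c) := by
      apply le_antisymm
      · intro x hx
        rw [Submodule.mem_inf, Submodule.restrictScalars_mem,
          Submodule.mem_span_singleton] at hx
        obtain ⟨hxU, a, rfl⟩ := hx
        have hx : a • ((c, (1:Fqn))) = gc c a := by
          rw [hgc_apply]; ext <;> simp [smul_eq_mul]
        exact ⟨a, show gc c a ∈ U by rw [← hx]; exact hxU, hx.symm⟩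
      · rintro x ⟨lam, hlam, rfl⟩
        rw [Submodule.mem_inf, Submodule.restrictScalars_mem, Submodule.mem_span_singleton]
        exact ⟨hlam, lam, by rw [hgc_apply]; ext <;> simp [smul_eq_mul]⟩
    rw [weight, hEq, finrank_map_of_inj (gc c) _ (by
      intro y _ hy
      rw [hgc_apply] at hy
      simpa using congrArg Prod.snd hy)]
  have hwT' : ∀ x : Fqt, weight U' (Submodule.span Fqt {(x, (1:Fqt))})
      = Module.finrank Fq ↥(Submodule.comap (gc' x) U') := by
    intro x
    have hEq : U' ⊓ (Submodule.span Fqt {(x, (1:Fqt))}).restrictScalars Fq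
        = (Submodule.comap (gc' x) U').map (gc' x) := by
      apply le_antisymm
      · intro y hy
        rw [Submodule.mem_inf, Submodule.restrictScalars_mem,
          Submodule.mem_span_singleton] at hy
        obtain ⟨hyU, a, rfl⟩ := hy
        have hx : a • ((x, (1:Fqt))) = gc' x a := by
          rw [hgc'_apply]; ext <;> simp [smul_eq_mul]
        exact ⟨a, show gc' x a ∈ U' by rw [← hx]; exact hyU, hx.symm⟩
      · rintro y ⟨mu, hmu, rfl⟩
        rw [Submodule.mem_inf, Submodule.restrictScalars_mem, Submodule.mem_span_singleton]
        exact ⟨hmu, mu, by rw [hgc'_apply]; ext <;> simp [smul_eq_mul]⟩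
    rw [weight, hEq, finrank_map_of_inj (gc' x) _ (by
      intro y _ hy
      rw [hgc'_apply] at hy
      simpa using congrArg Prod.snd hy)]
  have hT : ∀ s ∈ Sbar, ∀ x : Fqt,
      Submodule.comap (gc (s + b * algebraMap Fqt Fqn x)) U
        = (Submodule.comap (gc' x) U').map algl := by
    intro s hs x
    ext lam
    rw [Submodule.mem_comap, hgc_apply]
    constructor
    · intro hlam
      obtain ⟨s0, hs0, u, hu, heq⟩ := (hUmem _).1 hlam
      have h2 : lam = algebraMap Fqt Fqn u.2 := congrArg Prod.snd heq
      have h1 : lam * (s + b * algebraMap Fqt Fqn x)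
          = s0 + b * algebraMap Fqt Fqn u.1 := congrArg Prod.fst heq
      rw [h2] at h1
      have hy : algebraMap Fqt Fqn u.2 * s - s0
          = b * algebraMap Fqt Fqn (u.1 - u.2 * x) := by
        rw [map_sub, map_mul]
        linear_combination h1
      have hz := hdisj _ (Submodule.sub_mem Sbar
        (by rw [← hsmul]; exact Sbar.smul_mem u.2 hs) hs0) ⟨u.1 - u.2 * x, hy⟩
      have hbz : b * algebraMap Fqt Fqn (u.1 - u.2 * x) = 0 := by rw [← hy, hz]
      have hux : u.1 = u.2 * x := by
        rcases mul_eq_zero.1 hbz with h | h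
        · exact absurd h hb
        · exact sub_eq_zero.1 (hai (by simpa using h))
      refine ⟨u.2, ?_, ?_⟩
      · show gc' x u.2 ∈ U'
        have he : gc' x u.2 = u := by rw [hgc'_apply]; ext <;> simp [hux]
        rw [he]; exact hu
      · rw [halgl_apply]; exact h2.symm
    · rintro ⟨mu, hmu, rfl⟩
      have hmu' : ((mu * x, mu) : Fqt × Fqt) ∈ U' := hmu
      apply (hUmem _).2
      refine ⟨algebraMap Fqt Fqn mu * s,
        by rw [← hsmul]; exact Sbar.smul_mem mu hs, (mu * x, mu), hmu', ?_⟩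
      rw [halgl_apply]
      refine Prod.ext ?_ rfl
      show algebraMap Fqt Fqn mu * (s + b * algebraMap Fqt Fqn x)
        = algebraMap Fqt Fqn mu * s + b * algebraMap Fqt Fqn (mu * x)
      rw [map_mul]; ring
  have halglinj : ∀ y : Fqt, algl y = 0 → y = 0 := by
    intro y hy
    exact hai (by rw [map_zero]; exact hy)
  have hwc : ∀ s ∈ Sbar, ∀ x : Fqt,
      weight U (Submodule.span Fqn {(s + b * algebraMap Fqt Fqn x, (1:Fqn))})
        = weight U' (Submodule.span Fqt {(x, (1:Fqt))}) := by
    intro s hs x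
    rw [hwT, hwT', hT s hs x, finrank_map_of_inj algl _ (fun y _ hy => halglinj y hy)]
  have hmemls : ∀ s ∈ Sbar, ∀ x : Fqt,
      (Submodule.span Fqn {(s + b * algebraMap Fqt Fqn x, (1:Fqn))} ∈ linSet U
        ↔ Submodule.span Fqt {(x, (1:Fqt))} ∈ linSet U') := by
    intro s hs x
    rw [hls, hls']
    constructor
    · rintro ⟨lam, hlam, hmem⟩
      have hm : lam ∈ Submodule.comap (gc (s + b * algebraMap Fqt Fqn x)) U := hmem
      rw [hT s hs x] at hm
      obtain ⟨mu, hmu, rfl⟩ := hm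
      refine ⟨mu, ?_, ?_⟩
      · rintro rfl; exact hlam (map_zero algl)
      · exact hmu
    · rintro ⟨mu, hmu, hmem⟩
      refine ⟨algl mu, fun h => hmu (halglinj mu h), ?_⟩
      have hm : algl mu ∈ (Submodule.comap (gc' x) U').map algl := ⟨mu, hmem, rfl⟩
      rw [← hT s hs x] at hm
      exact hm
  have key : ∀ p : ℕ → Prop,
      Set.ncard {P | P ∈ linSet U ∧ p (weight U P)
          ∧ P ≠ Submodule.span Fqn {((1:Fqn),(0:Fqn))}}
        = q ^ (l * t) * Set.ncard {P | P ∈ linSet U' ∧ p (weight U' P)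
          ∧ P ≠ Submodule.span Fqt {((1:Fqt),(0:Fqt))}} := by
    intro p
    set A : Set Fqt := {x | Submodule.span Fqt {(x, (1:Fqt))} ∈ linSet U'
      ∧ p (weight U' (Submodule.span Fqt {(x, (1:Fqt))}))} with hA
    set B : Set Fqn := {c | Submodule.span Fqn {(c, (1:Fqn))} ∈ linSet U
      ∧ p (weight U (Submodule.span Fqn {(c, (1:Fqn))}))} with hB
    have himg : {P | P ∈ linSet U ∧ p (weight U P)
        ∧ P ≠ Submodule.span Fqn {((1:Fqn),(0:Fqn))}}
        = (fun c : Fqn => Submodule.span Fqn {(c, (1:Fqn))}) '' B := by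
      ext P
      constructor
      · rintro ⟨hP, hp, hne⟩
        obtain ⟨v, hv0, hvU, rfl⟩ := hP
        have hv2 : v.2 ≠ 0 := fun h => hne (span_second_zero v hv0 h)
        refine ⟨v.1 * v.2⁻¹, ?_, (span_slope v hv2).symm⟩
        rw [hB, Set.mem_setOf_eq, ← span_slope v hv2]
        exact ⟨⟨v, hv0, hvU, rfl⟩, hp⟩
      · rintro ⟨c, hc, rfl⟩
        exact ⟨hc.1, hc.2, span_slope_ne c⟩
    have himg' : {P | P ∈ linSet U' ∧ p (weight U' P)
        ∧ P ≠ Submodule.span Fqt {((1:Fqt),(0:Fqt))}}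
        = (fun x : Fqt => Submodule.span Fqt {(x, (1:Fqt))}) '' A := by
      ext P
      constructor
      · rintro ⟨hP, hp, hne⟩
        obtain ⟨v, hv0, hvU, rfl⟩ := hP
        have hv2 : v.2 ≠ 0 := fun h => hne (span_second_zero v hv0 h)
        refine ⟨v.1 * v.2⁻¹, ?_, (span_slope v hv2).symm⟩
        rw [hA, Set.mem_setOf_eq, ← span_slope v hv2]
        exact ⟨⟨v, hv0, hvU, rfl⟩, hp⟩
      · rintro ⟨x, hx, rfl⟩
        exact ⟨hx.1, hx.2, span_slope_ne x⟩
    have hBimg : B = (fun sx : Fqn × Fqt => sx.1 + b * algebraMap Fqt Fqn sx.2) ''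
        ((Sbar : Set Fqn) ×ˢ A) := by
      ext c
      constructor
      · intro hc
        obtain ⟨hc1, hc2⟩ := hc
        obtain ⟨lam, hlam, hmem⟩ := (hls c).1 hc1
        obtain ⟨s0, hs0, u, hu, heq⟩ := (hUmem _).1 hmem
        have h2 : lam = algebraMap Fqt Fqn u.2 := congrArg Prod.snd heq
        have h1 : lam * c = s0 + b * algebraMap Fqt Fqn u.1 := congrArg Prod.fst heq
        have hu2 : u.2 ≠ 0 := by
          rintro h; rw [h, map_zero] at h2; exact hlam h2
        have hau2 : algebraMap Fqt Fqn u.2 ≠ 0 := fun h => hu2 (hai (by simpa using h))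
        rw [h2] at h1
        set s : Fqn := algebraMap Fqt Fqn u.2⁻¹ * s0 with hsdef
        have hsS : s ∈ Sbar := by rw [hsdef, ← hsmul]; exact Sbar.smul_mem _ hs0
        have hcx : c = s + b * algebraMap Fqt Fqn (u.2⁻¹ * u.1) := by
          apply mul_left_cancel₀ hau2
          rw [h1, hsdef, map_mul, map_inv₀]
          field_simp
        refine ⟨(s, u.2⁻¹ * u.1), ⟨hsS, ?_⟩, hcx.symm⟩
        rw [hA, Set.mem_setOf_eq]
        constructor
        · exact (hmemls s hsS _).1 (hcx ▸ hc1)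
        · rw [← hwc s hsS _, ← hcx]; exact hc2
      · rintro ⟨⟨s, x⟩, ⟨hs, hx⟩, rfl⟩
        obtain ⟨hx1, hx2⟩ := hx
        exact ⟨(hmemls s hs x).2 hx1, by rw [hwc s hs x]; exact hx2⟩
    have hinj1 : Function.Injective (fun c : Fqn => Submodule.span Fqn {(c, (1:Fqn))}) :=
      fun _ _ h => span_slope_inj h
    have hinj2 : Function.Injective (fun x : Fqt => Submodule.span Fqt {(x, (1:Fqt))}) :=
      fun _ _ h => span_slope_inj h
    have hinjOn : Set.InjOn (fun sx : Fqn × Fqt => sx.1 + b * algebraMap Fqt Fqn sx.2)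
        ((Sbar : Set Fqn) ×ˢ A) := by
      rintro ⟨s1, x1⟩ ⟨hs1, _⟩ ⟨s2, x2⟩ ⟨hs2, _⟩ h
      simp only at h
      have hy : s1 - s2 = b * algebraMap Fqt Fqn (x2 - x1) := by
        rw [map_sub]; linear_combination h
      have h0 := hdisj _ (Sbar.sub_mem hs1 hs2) ⟨x2 - x1, hy⟩
      have hx : x2 = x1 := by
        have hb0 : b * algebraMap Fqt Fqn (x2 - x1) = 0 := by rw [← hy, h0]
        rcases mul_eq_zero.1 hb0 with hcase | hcase
        · exact absurd hcase hb
        · exact sub_eq_zero.1 (hai (by simpa using hcase))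
      have hseq : s1 = s2 := sub_eq_zero.1 h0
      exact Prod.ext hseq hx.symm
    rw [himg, himg', Set.ncard_image_of_injective B hinj1,
      Set.ncard_image_of_injective A hinj2, hBimg, Set.ncard_image_of_injOn hinjOn]
    have hprod : ((Sbar : Set Fqn) ×ˢ A).ncard = (Sbar : Set Fqn).ncard * A.ncard := by
      rw [← Nat.card_coe_set_eq, ← Nat.card_coe_set_eq, ← Nat.card_coe_set_eq,
        Nat.card_congr (Equiv.Set.prod (Sbar : Set Fqn) A), Nat.card_prod]
    have hcard : (Sbar : Set Fqn).ncard = q ^ (l * t) := by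
      haveI : Finite Fqn := Module.finite_of_finite Fq
      haveI : Fintype ↥Sbar := Fintype.ofFinite ↥Sbar
      rw [← Nat.card_coe_set_eq]
      have hco : Nat.card ↥(Sbar : Set Fqn) = Nat.card ↥Sbar := rfl
      rw [hco, Nat.card_eq_fintype_card, Module.card_eq_pow_finrank (K := Fq) (V := ↥Sbar),
        hfinSbar, hq, Nat.mul_comm t l]
    rw [hprod, hcard]
  constructor
  · intro i _
    exact key (fun w => w = i)
  · have e1 : linSet U \ {Submodule.span Fqn {((1:Fqn),(0:Fqn))}}
        = {P | P ∈ linSet U ∧ (fun _ : ℕ => True) (weight U P)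
          ∧ P ≠ Submodule.span Fqn {((1:Fqn),(0:Fqn))}} := by
      ext P; simp [Set.mem_diff]
    have e2 : linSet U' \ {Submodule.span Fqt {((1:Fqt),(0:Fqt))}}
        = {P | P ∈ linSet U' ∧ (fun _ : ℕ => True) (weight U' P)
          ∧ P ≠ Submodule.span Fqt {((1:Fqt),(0:Fqt))}} := by
      ext P; simp [Set.mem_diff]
    rw [e1, e2]
    exact key (fun _ => True)
end

section
/- Let ℓ', t > 1 be integers with n = ℓ'·t, and identify 𝔽_{q^t} with the subfield of 𝔽_{q^n} of order q^t. Let U' be an 𝔽_q-subspace of 𝔽_{q^t}² with dim_{𝔽_q}(U') = m ≤ t such that the 𝔽_q-linear set L_{U'} = {⟨u⟩_{𝔽_{q^t}} : u ∈ U'∖{0}} ⊆ PG(1,q^t) is scattered, i.e., every point of L_{U'} has weight one in L_{U'}. Let S̄ be an 𝔽_{q^t}-subspace of 𝔽_{q^n} with dim_{𝔽_{q^t}}(S̄) = ℓ, 1 ≤ ℓ < ℓ', let b ∈ 𝔽_{q^n} ∖ {0} with S̄ ∩ b·𝔽_{q^t} = {0}, and let U = {(s + b·u₁, u₂) : s ∈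 S̄, (u₁, u₂) ∈ U'} ⊆ 𝔽_{q^n}². Then L_U is an i-club of rank ℓt + m in PG(1,q^n) with i = tℓ + w₀, where w₀ = dim_{𝔽_q}(U' ∩ (𝔽_{q^t} × {0})) ∈ {0,1}; that is, dim_{𝔽_q}(U) = ℓt + m, the point ⟨(1,0)⟩_{𝔽_{q^n}} has weight i = tℓ + w₀ in L_U, and every other point of L_U has weight one. -/
open Submodule

section AuxMaps

variable (Fq : Type*) {Fqt Fqn : Type*} [Field Fq] [Field Fqt] [Field Fqn]
  [Algebra Fq Fqt] [Algebra Fqt Fqn] [Algebra Fq Fqn] [IsScalarTower Fq Fqt Fqn]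

lemma iota_smul (c : Fq) (x : Fqt) :
    algebraMap Fqt Fqn (c • x) = c • algebraMap Fqt Fqn x := by
  rw [Algebra.smul_def, Algebra.smul_def, map_mul, ← IsScalarTower.algebraMap_apply]

noncomputable def gmap (b : Fqn) : (Fqn × (Fqt × Fqt)) →ₗ[Fq] (Fqn × Fqn) where
  toFun p := (p.1 + b * algebraMap Fqt Fqn p.2.1, algebraMap Fqt Fqn p.2.2)
  map_add' p q := by
    simp only [Prod.fst_add, Prod.snd_add, map_add, Prod.mk_add_mk, mul_add]
    exact Prod.ext (by ring) rfl
  map_smul' c p := by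
    simp only [Prod.smul_fst, Prod.smul_snd, iota_smul, RingHom.id_apply, Prod.smul_mk,
      smul_add, mul_smul_comm]

@[simp] lemma gmap_apply (b : Fqn) (p : Fqn × (Fqt × Fqt)) :
    gmap Fq b p = (p.1 + b * algebraMap Fqt Fqn p.2.1, algebraMap Fqt Fqn p.2.2) := rfl

noncomputable def fmap (v : Fqn × Fqn) : Fqt →ₗ[Fq] (Fqn × Fqn) where
  toFun μ := algebraMap Fqt Fqn μ • v
  map_add' μ ν := by simp [add_smul]
  map_smul' c μ := by simp [iota_smul, smul_assoc]

@[simp] lemma fmap_apply (v : Fqn × Fqn) (μ : Fqt) :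
    fmap Fq v μ = algebraMap Fqt Fqn μ • v := rfl

noncomputable def emap (u : Fqt × Fqt) : Fqt →ₗ[Fq] (Fqt × Fqt) where
  toFun μ := μ • u
  map_add' μ ν := by simp [add_smul]
  map_smul' c μ := by simp [smul_assoc]

@[simp] lemma emap_apply (u : Fqt × Fqt) (μ : Fqt) : emap Fq u μ = μ • u := rfl

end AuxMaps

/-- Tower `F_q ⊆ F_{q^t} ⊆ F_{q^n}`, `n = ℓ'·t`, `U'` an `F_q`-subspace
of `F_{q^t}²` of dimension `m ≤ t` with `L_{U'}` scattered, `S̄` an `F_{q^t}`-subspace of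
`F_{q^n}` of dimension `ℓ`, `1 ≤ ℓ < ℓ'`, `b ≠ 0` with `S̄ ∩ b·F_{q^t} = {0}`, and
`U = {(s + b·u₁, u₂) : s ∈ S̄, (u₁,u₂) ∈ U'}`. Then `L_U` is an `i`-club of rank
`ℓt + m` with `i = tℓ + w₀`, `w₀ = w_{L_{U'}}(⟨(1,0)⟩) ∈ {0,1}`: `dim_{F_q} U = ℓt + m`,
the point `⟨(1,0)⟩` has weight `tℓ + w₀` in `L_U`, and every other point of `L_U`
has weight one. -/
theorem stmt14 (Fq Fqt Fqn : Type*) [Field Fq] [Field Fqt] [Field Fqn]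
    [Algebra Fq Fqt] [Algebra Fqt Fqn] [Algebra Fq Fqn] [IsScalarTower Fq Fqt Fqn]
    [Fintype Fq] (q n t l' : ℕ) (hq : Fintype.card Fq = q)
    (ht : Module.finrank Fq Fqt = t) (hl' : Module.finrank Fqt Fqn = l') (hn : n = l' * t)
    (ht1 : 1 < t) (hl'1 : 1 < l')
    (U' : Submodule Fq (Fqt × Fqt)) (m : ℕ) (hm : Module.finrank Fq ↥U' = m) (hmt : m ≤ t)
    (hscattered : ∀ P ∈ linSet U', weight U' P = 1)
    (Sbar : Submodule Fqt Fqn) (l : ℕ) (hl : Module.finrank Fqt ↥Sbar = l)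
    (hl1 : 1 ≤ l) (hll' : l < l')
    (b : Fqn) (hb : b ≠ 0)
    (hdisj : ∀ x ∈ Sbar, (∃ c : Fqt, x = b * algebraMap Fqt Fqn c) → x = 0)
    (U : Submodule Fq (Fqn × Fqn))
    (hU : (U : Set (Fqn × Fqn)) =
      {p | ∃ s ∈ Sbar, ∃ u ∈ U',
        p = (s + b * algebraMap Fqt Fqn u.1, algebraMap Fqt Fqn u.2)})
    (w₀ : ℕ) (hw₀ : w₀ = weight U' (Submodule.span Fqt {((1 : Fqt), (0 : Fqt))})) :
    (w₀ = 0 ∨ w₀ = 1) ∧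
    Module.finrank Fq ↥U = l * t + m ∧
    weight U (Submodule.span Fqn {((1 : Fqn), (0 : Fqn))}) = t * l + w₀ ∧
    ∀ P ∈ linSet U, P ≠ Submodule.span Fqn {((1 : Fqn), (0 : Fqn))} → weight U P = 1 := by
  have hι : Function.Injective (algebraMap Fqt Fqn) := (algebraMap Fqt Fqn).injective
  haveI : FiniteDimensional Fq Fqt := FiniteDimensional.of_finrank_pos (by omega : 0 < Module.finrank Fq Fqt)
  haveI : FiniteDimensional Fqt Fqn := FiniteDimensional.of_finrank_pos (by omega : 0 < Module.finrank Fqt Fqn)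
  haveI : FiniteDimensional Fq Fqn := Module.Finite.trans Fqt Fqn
  -- membership in U
  have hUmem : ∀ p : Fqn × Fqn, p ∈ U ↔ ∃ s ∈ Sbar, ∃ u ∈ U',
      p = (s + b * algebraMap Fqt Fqn u.1, algebraMap Fqt Fqn u.2) := by
    intro p
    rw [← SetLike.mem_coe, hU]
    rfl
  -- the key disjointness consequence
  have hkey : ∀ s ∈ Sbar, ∀ c : Fqt, s = b * algebraMap Fqt Fqn c → s = 0 ∧ c = 0 := by
    intro s hs c hsc
    have hs0 : s = 0 := hdisj s hs ⟨c, hsc⟩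
    refine ⟨hs0, ?_⟩
    rw [hs0] at hsc
    rcases mul_eq_zero.mp hsc.symm with h | h
    · exact absurd h hb
    · exact hι (by simpa using h)
  -- Part A : w₀ = 0 ∨ w₀ = 1
  have partA : w₀ = 0 ∨ w₀ = 1 := by
    rcases Nat.eq_zero_or_pos w₀ with h0 | hpos
    · exact Or.inl h0
    · right
      have hVpos : 0 < Module.finrank Fq
          ↥(U' ⊓ (Submodule.span Fqt {((1 : Fqt), (0 : Fqt))}).restrictScalars Fq) := by
        rw [hw₀] at hpos; exact hpos
      obtain ⟨x, hx0⟩ := Module.finrank_pos_iff_exists_ne_zero.mp hVpos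
      obtain ⟨hx1, hx2⟩ := Submodule.mem_inf.mp x.2
      have hx2' : (x : Fqt × Fqt) ∈ Submodule.span Fqt {((1 : Fqt), (0 : Fqt))} := hx2
      obtain ⟨c, hc⟩ := Submodule.mem_span_singleton.mp hx2'
      have hxne : (x : Fqt × Fqt) ≠ 0 := fun h => hx0 (Subtype.ext h)
      have hcne : c ≠ 0 := by rintro rfl; rw [zero_smul] at hc; exact hxne hc.symm
      have hspan : Submodule.span Fqt {((1 : Fqt), (0 : Fqt))}
          = Submodule.span Fqt {(x : Fqt × Fqt)} := by
        conv_rhs => rw [← hc]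
        exact (Submodule.span_singleton_smul_eq (isUnit_iff_ne_zero.mpr hcne) _).symm
      rw [hw₀]
      exact hscattered _ ⟨x, hxne, hx1, hspan⟩
  -- dimension of Sbar over Fq
  have hSb : Module.finrank Fq ↥(Sbar.restrictScalars Fq) = t * l := by
    have h1 : Module.finrank Fqt ↥(Sbar.restrictScalars Fq) = l := by
      rw [← hl]
      exact (Submodule.restrictScalarsEquiv Fq Fqt Fqn Sbar).finrank_eq
    rw [← ht, ← h1]
    exact (Module.finrank_mul_finrank Fq Fqt ↥(Sbar.restrictScalars Fq)).symm
  -- generic injectivity of gmap composed with inclusions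
  have hginj : ∀ (W : Submodule Fq (Fqt × Fqt)), Function.Injective
      ((gmap Fq b).comp (((Sbar.restrictScalars Fq).subtype).prodMap W.subtype)) := by
    intro W
    rw [← LinearMap.ker_eq_bot]
    rw [LinearMap.ker_eq_bot']
    rintro ⟨s, u⟩ hp
    simp only [LinearMap.comp_apply, LinearMap.prodMap_apply, gmap_apply, Prod.mk_eq_zero,
      Submodule.subtype_apply] at hp
    obtain ⟨h1, h2⟩ := hp
    have hu2 : (u : Fqt × Fqt).2 = 0 := hι (by simpa using h2)
    have hs' : (s : Fqn) = b * algebraMap Fqt Fqn (-(u : Fqt × Fqt).1) := by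
      rw [map_neg, mul_neg]
      linear_combination h1
    obtain ⟨hs0, hu1⟩ := hkey s s.2 _ hs'
    have hu1' : (u : Fqt × Fqt).1 = 0 := by simpa [neg_eq_zero] using hu1
    refine Prod.ext (Subtype.ext hs0) (Subtype.ext (Prod.ext hu1' hu2))
  -- Part B : finrank U
  have partB : Module.finrank Fq ↥U = l * t + m := by
    have hrange : LinearMap.range
        ((gmap Fq b).comp (((Sbar.restrictScalars Fq).subtype).prodMap U'.subtype)) = U := by
      apply le_antisymm
      · rintro p ⟨⟨s, u⟩, rfl⟩
        rw [hUmem]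
        exact ⟨s, s.2, u, u.2, rfl⟩
      · intro p hp
        obtain ⟨s, hs, u, hu, rfl⟩ := (hUmem p).mp hp
        exact ⟨(⟨s, hs⟩, ⟨u, hu⟩), rfl⟩
    rw [← hrange, LinearMap.finrank_range_of_inj (hginj U'), Module.finrank_prod, hSb, hm,
      Nat.mul_comm]
  -- Part C : weight of ⟨(1,0)⟩
  have partC : weight U (Submodule.span Fqn {((1 : Fqn), (0 : Fqn))}) = t * l + w₀ := by
    set V : Submodule Fq (Fqt × Fqt) :=
      U' ⊓ (Submodule.span Fqt {((1 : Fqt), (0 : Fqt))}).restrictScalars Fq with hVdef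
    have hrange : LinearMap.range
        ((gmap Fq b).comp (((Sbar.restrictScalars Fq).subtype).prodMap V.subtype))
        = U ⊓ (Submodule.span Fqn {((1 : Fqn), (0 : Fqn))}).restrictScalars Fq := by
      apply le_antisymm
      · rintro p ⟨⟨s, u⟩, rfl⟩
        obtain ⟨hu1, hu2⟩ := Submodule.mem_inf.mp u.2
        obtain ⟨c, hc⟩ := Submodule.mem_span_singleton.mp (hu2 : (u : Fqt × Fqt) ∈ _)
        have hu2' : (u : Fqt × Fqt).2 = 0 := by
          rw [← hc]; simp
        refine Submodule.mem_inf.mpr ⟨?_, ?_⟩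
        · rw [hUmem]
          exact ⟨s, s.2, u, hu1, rfl⟩
        · show _ ∈ Submodule.span Fqn {((1 : Fqn), (0 : Fqn))}
          rw [Submodule.mem_span_singleton]
          refine ⟨(s : Fqn) + b * algebraMap Fqt Fqn (u : Fqt × Fqt).1, ?_⟩
          simp [hu2', Prod.smul_mk]
      · intro p hp
        obtain ⟨hp1, hp2⟩ := Submodule.mem_inf.mp hp
        obtain ⟨s, hs, u, hu, rfl⟩ := (hUmem p).mp hp1
        obtain ⟨c, hc⟩ := Submodule.mem_span_singleton.mp
          (hp2 : _ ∈ Submodule.span Fqn {((1 : Fqn), (0 : Fqn))})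
        have h2 : algebraMap Fqt Fqn u.2 = 0 := by
          have := congrArg Prod.snd hc
          simpa using this.symm
        have hu2 : u.2 = 0 := hι (by simpa using h2)
        have huV : u ∈ V := by
          refine Submodule.mem_inf.mpr ⟨hu, ?_⟩
          show u ∈ Submodule.span Fqt {((1 : Fqt), (0 : Fqt))}
          rw [Submodule.mem_span_singleton]
          exact ⟨u.1, by simp [Prod.ext_iff, hu2]⟩
        exact ⟨(⟨s, hs⟩, ⟨u, huV⟩), rfl⟩
    have hV : Module.finrank Fq ↥V = w₀ := hw₀.symm
    show Module.finrank Fq ↥(U ⊓ _) = t * l + w₀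
    rw [← hrange, LinearMap.finrank_range_of_inj (hginj V), Module.finrank_prod, hSb, hV]
  refine ⟨partA, partB, partC, ?_⟩
  -- Part D : all other points have weight 1
  rintro P ⟨v, hv0, hvU, rfl⟩ hPne
  obtain ⟨s, hs, u, hu, hv⟩ := (hUmem v).mp hvU
  have hu2 : u.2 ≠ 0 := by
    intro h
    apply hPne
    have hnz : v.1 ≠ 0 := by
      intro h1
      apply hv0
      have : v.2 = 0 := by rw [hv]; simp [h]
      exact Prod.ext h1 this
    have hveq : v = v.1 • ((1 : Fqn), (0 : Fqn)) := by
      have : v.2 = 0 := by rw [hv]; simp [h]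
      rw [Prod.ext_iff]; simp [this]
    rw [hveq]
    exact Submodule.span_singleton_smul_eq (isUnit_iff_ne_zero.mpr hnz) _
  have hu0 : u ≠ 0 := fun h => hu2 (by rw [h]; rfl)
  have hQ : Module.finrank Fq ↥(U' ⊓ (Submodule.span Fqt {u}).restrictScalars Fq) = 1 :=
    hscattered _ ⟨u, hu0, hu, rfl⟩
  -- the comap submodule
  set W4 : Submodule Fq Fqt := U'.comap (emap Fq u) with hW4def
  have hW4mem : ∀ μ : Fqt, μ ∈ W4 ↔ μ • u ∈ U' := fun μ => Iff.rfl
  have heinj : Function.Injective (emap Fq u) := by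
    rw [← LinearMap.ker_eq_bot, LinearMap.ker_eq_bot']
    intro μ hμ
    simp only [emap_apply, smul_eq_zero] at hμ
    rcases hμ with h | h
    · exact h
    · exact absurd h hu0
  have hmape : W4.map (emap Fq u) = U' ⊓ (Submodule.span Fqt {u}).restrictScalars Fq := by
    apply le_antisymm
    · rintro p ⟨μ, hμ, rfl⟩
      refine Submodule.mem_inf.mpr ⟨hμ, ?_⟩
      show (μ • u) ∈ Submodule.span Fqt {u}
      exact Submodule.smul_mem _ _ (Submodule.mem_span_singleton_self u)
    · intro p hp
      obtain ⟨hp1, hp2⟩ := Submodule.mem_inf.mp hp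
      obtain ⟨μ, hμ⟩ := Submodule.mem_span_singleton.mp (hp2 : p ∈ Submodule.span Fqt {u})
      have hμW : μ ∈ W4 := by
        rw [hW4def, Submodule.mem_comap, emap_apply, hμ]; exact hp1
      exact Submodule.mem_map.mpr ⟨μ, hμW, hμ⟩
  have h1 : Module.finrank Fq ↥W4 = 1 := by
    rw [← hQ, ← hmape]
    exact (Submodule.equivMapOfInjective (emap Fq u) heinj W4).finrank_eq
  have hfinj : Function.Injective (fmap Fq (Fqt := Fqt) v) := by
    rw [← LinearMap.ker_eq_bot, LinearMap.ker_eq_bot']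
    intro μ hμ
    simp only [fmap_apply, smul_eq_zero] at hμ
    rcases hμ with h | h
    · exact hι (by simpa using h)
    · exact absurd h hv0
  have hmapf : W4.map (fmap Fq v) = U ⊓ (Submodule.span Fqn {v}).restrictScalars Fq := by
    apply le_antisymm
    · rintro p ⟨μ, hμ, rfl⟩
      refine Submodule.mem_inf.mpr ⟨?_, ?_⟩
      · rw [hUmem]
        refine ⟨μ • s, Sbar.smul_mem μ hs, μ • u, (hW4mem μ).mp hμ, ?_⟩
        rw [fmap_apply, hv]
        refine Prod.ext ?_ ?_
        · show algebraMap Fqt Fqn μ * (s + b * algebraMap Fqt Fqn u.1)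
            = μ • s + b * algebraMap Fqt Fqn (μ • u).1
          rw [Algebra.smul_def]
          show _ = _ + b * algebraMap Fqt Fqn (μ * u.1)
          rw [map_mul]
          ring
        · show algebraMap Fqt Fqn μ * algebraMap Fqt Fqn u.2
            = algebraMap Fqt Fqn (μ • u).2
          show _ = algebraMap Fqt Fqn (μ * u.2)
          rw [map_mul]
      · show _ ∈ Submodule.span Fqn {v}
        exact Submodule.smul_mem _ _ (Submodule.mem_span_singleton_self v)
    · intro p hp
      obtain ⟨hp1, hp2⟩ := Submodule.mem_inf.mp hp
      obtain ⟨lam, hlam⟩ := Submodule.mem_span_singleton.mp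
        (hp2 : p ∈ Submodule.span Fqn {v})
      obtain ⟨s', hs', u', hu', heq⟩ := (hUmem p).mp hp1
      set μ : Fqt := u'.2 * u.2⁻¹ with hμdef
      have h2 : lam * algebraMap Fqt Fqn u.2 = algebraMap Fqt Fqn u'.2 := by
        have := congrArg Prod.snd (hlam.trans heq)
        simpa [hv] using this
      have hz : algebraMap Fqt Fqn u.2 ≠ 0 := fun hc => hu2 (hι (by simpa using hc))
      have hlamμ : lam = algebraMap Fqt Fqn μ := by
        rw [hμdef, map_mul, map_inv₀, ← h2]
        field_simp
      have hfst : lam * (s + b * algebraMap Fqt Fqn u.1)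
          = s' + b * algebraMap Fqt Fqn u'.1 := by
        have := congrArg Prod.fst (hlam.trans heq)
        simpa [hv] using this
      have hsub : μ • s - s' = b * algebraMap Fqt Fqn (u'.1 - μ * u.1) := by
        rw [map_sub, map_mul, mul_sub, Algebra.smul_def]
        rw [hlamμ] at hfst
        linear_combination hfst
      obtain ⟨hz1, hz2⟩ := hkey _ (Submodule.sub_mem Sbar (Sbar.smul_mem μ hs) hs') _ hsub
      have hu'1 : u'.1 = μ * u.1 := by linear_combination hz2
      have hu'2 : u'.2 = μ * u.2 := by
        rw [hμdef]
        field_simp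
      have hμW : μ ∈ W4 := by
        rw [hW4mem]
        have : μ • u = u' := by
          refine Prod.ext ?_ ?_
          · show μ * u.1 = u'.1; rw [hu'1]
          · show μ * u.2 = u'.2; rw [hu'2]
        rw [this]; exact hu'
      refine ⟨μ, hμW, ?_⟩
      rw [fmap_apply, ← hlamμ, hlam]
  show Module.finrank Fq ↥(U ⊓ _) = 1
  rw [← hmapf, ← h1]
  exact ((Submodule.equivMapOfInjective (fmap Fq v) hfinj W4).finrank_eq).symm
end

section
/- Let ℓ', t > 1 be integers with n = ℓ'·t, let μ ∈ 𝔽_{q^n} with 𝔽_q(μ) = 𝔽_{q^t}, let S̄ be an 𝔽_{q^t}-subspace of 𝔽_{q^n} with dim_{𝔽_{q^t}}(S̄) = ℓ, 1 ≤ ℓ < ℓ', and let b ∈ 𝔽_{q^n} ∖ {0} with S̄ ∩ b·𝔽_{q^t} = {0}. Let m be an integer with 0 < m ≤ t−1 and suppose n = ℓt + m + 2. Set U₁ = (S̄ ⊕ b·⟨1, μ, …, μ^{m−1}⟩_{𝔽_q}) × ⟨1, μ⟩_{𝔽_q}. Let λ ∈ 𝔽_{q^n} ∖ 𝔽_q with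 s := dim_{𝔽_q}(𝔽_q(λ)) satisfying ℓt + m ≤ s − 1, and set k = ℓt + m and U₂ = ⟨1, λ, …, λ^{k−1}⟩_{𝔽_q} × ⟨1, λ⟩_{𝔽_q}. Then U₁ and U₂ are not ΓL(2,q^n)-equivalent: there is no field automorphism ρ of 𝔽_{q^n} and no invertible 𝔽_{q^n}-linear map f of 𝔽_{q^n}² such that f({(ρ(x), ρ(y)) : (x,y) ∈ U₁}) = U₂. -/
open Submodule

/-- The cardinality of `⟨1, μ, …, μ^{m-1}⟩_{F_q}` is at most `q^m`. -/
lemma aux_card_pows_le {Fq Fqn : Type*} [Field Fq] [Field Fqn] [Algebra Fq Fqn] [Fintype Fq]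
    [Finite Fqn] (μ : Fqn) (m : ℕ) :
    Nat.card ↥(pows Fq μ m) ≤ Fintype.card Fq ^ m := by
  classical
  have hmem : ∀ c : Fin m → Fq, (∑ i, c i • μ ^ (i : ℕ)) ∈ pows Fq μ m := by
    intro c
    exact Submodule.sum_mem _ fun i _ =>
      Submodule.smul_mem _ _ (Submodule.subset_span ⟨i, rfl⟩)
  have hsurj : Function.Surjective
      (fun c : Fin m → Fq => (⟨∑ i, c i • μ ^ (i : ℕ), hmem c⟩ : ↥(pows Fq μ m))) := by
    rintro ⟨x, hx⟩
    obtain ⟨c, hc⟩ := (Finsupp.mem_span_range_iff_exists_finsupp.mp hx)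
    refine ⟨c, ?_⟩
    apply Subtype.ext
    simpa [Finsupp.sum_fintype] using hc
  have := Nat.card_le_card_of_surjective _ hsurj
  simpa [Nat.card_eq_fintype_card] using this

/-- The fixed points of `x ↦ x^q` in `Fqn` are exactly the image of `Fq`. -/
lemma aux_range_eq {Fq Fqn : Type*} [Field Fq] [Field Fqn] [Algebra Fq Fqn] [Fintype Fq]
    [Finite Fqn] (q : ℕ) (hq : Fintype.card Fq = q) :
    {x : Fqn | x ^ q = x} = Set.range (algebraMap Fq Fqn) := by
  classical
  have hq2 : 1 < q := hq ▸ Fintype.one_lt_card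
  have hsub : Set.range (algebraMap Fq Fqn) ⊆ {x : Fqn | x ^ q = x} := by
    rintro _ ⟨a, rfl⟩
    show (algebraMap Fq Fqn a) ^ q = algebraMap Fq Fqn a
    rw [← map_pow, ← hq, FiniteField.pow_card]
  set p : Polynomial Fqn := Polynomial.X ^ q - Polynomial.X with hp
  have hpne : p ≠ 0 := by
    intro h
    have hco := congrArg (fun r => Polynomial.coeff r q) h
    simp only [hp, Polynomial.coeff_sub, Polynomial.coeff_X_pow, if_pos rfl,
      Polynomial.coeff_X, Polynomial.coeff_zero] at hco
    rw [if_neg (by omega : ¬ (1 = q))] at hco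
    norm_num at hco
  have hdeg : p.natDegree ≤ q := by
    refine le_trans (Polynomial.natDegree_sub_le _ _) ?_
    simp [Polynomial.natDegree_X_pow, Polynomial.natDegree_X]
    omega
  have hroots : {x : Fqn | x ^ q = x} ⊆ ↑p.roots.toFinset := by
    intro x hx
    simp only [Finset.coe_sort_coe, Multiset.mem_toFinset, Finset.mem_coe]
    rw [Polynomial.mem_roots hpne]
    simp only [Polynomial.IsRoot, hp, Polynomial.eval_sub, Polynomial.eval_pow,
      Polynomial.eval_X, sub_eq_zero]
    exact hx
  have hcard1 : {x : Fqn | x ^ q = x}.ncard ≤ q := by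
    calc {x : Fqn | x ^ q = x}.ncard ≤ (↑p.roots.toFinset : Set Fqn).ncard :=
          Set.ncard_le_ncard hroots (Set.toFinite _)
      _ = p.roots.toFinset.card := Set.ncard_coe_finset _
      _ ≤ Multiset.card p.roots := Multiset.toFinset_card_le _
      _ ≤ p.natDegree := Polynomial.card_roots' p
      _ ≤ q := hdeg
  have hcard2 : (Set.range (algebraMap Fq Fqn)).ncard = q := by
    rw [← Set.image_univ, Set.ncard_image_of_injective _ (algebraMap Fq Fqn).injective,
      Set.ncard_univ, Nat.card_eq_fintype_card, hq]
  exact (Set.eq_of_subset_of_ncard_le hsub (by rw [hcard2]; exact hcard1)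
    (Set.toFinite _)).symm

/-- With `n = ℓ'·t`, `F_q(μ) = F_{q^t}`, `S̄` an `F_{q^t}`-subspace of
`F_{q^t}`-dimension `ℓ`, `1 ≤ ℓ < ℓ'`, `b ≠ 0`, `S̄ ∩ b·F_{q^t} = {0}`, `0 < m ≤ t - 1`,
`n = ℓt + m + 2`, `U₁ = (S̄ ⊕ b·⟨1,…,μ^{m-1}⟩) × ⟨1, μ⟩`, and, for `λ ∉ F_q` with
`s = dim_{F_q} F_q(λ)` and `ℓt + m ≤ s - 1`, `k = ℓt + m`,
`U₂ = ⟨1,…,λ^{k-1}⟩ × ⟨1, λ⟩`: the subspaces `U₁` and `U₂` are not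
`ΓL(2,q^n)`-equivalent. -/
theorem stmt16 (Fq Fqn : Type*) [Field Fq] [Field Fqn] [Algebra Fq Fqn] [Fintype Fq]
    (q n t l' : ℕ) (hq : Fintype.card Fq = q) (hn : Module.finrank Fq Fqn = n)
    (hnl : n = l' * t) (ht1 : 1 < t) (hl'1 : 1 < l')
    (μ : Fqn) (hμt : Module.finrank Fq ↥(Algebra.adjoin Fq {μ}) = t)
    (Sbar : Submodule Fq Fqn)
    (hSmod : ∀ α ∈ Algebra.adjoin Fq {μ}, ∀ s ∈ Sbar, α * s ∈ Sbar)
    (l : ℕ) (hl1 : 1 ≤ l) (hll' : l < l') (hSdim : Module.finrank Fq ↥Sbar = l * t)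
    (b : Fqn) (hb : b ≠ 0)
    (hdisj : Disjoint Sbar (bmul Fq b (Subalgebra.toSubmodule (Algebra.adjoin Fq {μ}))))
    (m : ℕ) (hm : 0 < m) (hmt : m ≤ t - 1)
    (hnk : n = l * t + m + 2)
    (U₁ : Submodule Fq (Fqn × Fqn))
    (hU₁ : U₁ = (Sbar ⊔ bmul Fq b (pows Fq μ m)).prod (pows Fq μ 2))
    (lam : Fqn) (hlam : lam ∉ Set.range (algebraMap Fq Fqn))
    (s : ℕ) (hs : Module.finrank Fq ↥(Algebra.adjoin Fq {lam}) = s)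
    (hks : l * t + m + 1 ≤ s)
    (k : ℕ) (hk : k = l * t + m)
    (U₂ : Submodule Fq (Fqn × Fqn))
    (hU₂ : U₂ = (pows Fq lam k).prod (pows Fq lam 2)) :
    ¬ ∃ (ρ : Fqn ≃+* Fqn) (f : (Fqn × Fqn) ≃ₗ[Fqn] (Fqn × Fqn)),
        (fun p : Fqn × Fqn => f (ρ p.1, ρ p.2)) '' (U₁ : Set (Fqn × Fqn))
          = (U₂ : Set (Fqn × Fqn)) := by
  classical
  rintro ⟨ρ, f, hf⟩
  have hq2 : 1 < q := hq ▸ Fintype.one_lt_card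
  have hFD : FiniteDimensional Fq Fqn :=
    FiniteDimensional.of_finrank_pos (by rw [hn, hnk]; omega)
  haveI : Finite Fqn := Module.finite_of_finite Fq
  set φ : Fqn × Fqn → Fqn × Fqn := fun p => f (ρ p.1, ρ p.2) with hφdef
  have hφsmul : ∀ (c : Fqn) (v : Fqn × Fqn), φ (c • v) = ρ c • φ v := by
    intro c v
    show f (ρ (c • v).1, ρ (c • v).2) = ρ c • f (ρ v.1, ρ v.2)
    rw [← map_smul]
    congr 1
    simp [Prod.smul_def, smul_eq_mul, map_mul]
  have hφinj : Function.Injective φ := by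
    intro u v huv
    have h2 := f.injective huv
    rw [Prod.ext_iff] at h2 ⊢
    exact ⟨ρ.injective h2.1, ρ.injective h2.2⟩
  have hφ10 : φ ((1 : Fqn), (0 : Fqn)) = f (1, 0) := by
    simp [hφdef]
  have hlt : t ≤ l * t := Nat.le_mul_of_pos_left t hl1
  -- Step 1: the second coordinate of `f (1,0)` is zero.
  have hw2 : (f ((1 : Fqn), (0 : Fqn))).2 = 0 := by
    by_contra hw2
    set w : Fqn × Fqn := f ((1 : Fqn), (0 : Fqn)) with hwdef
    set T₀ : Submodule Fq Fqn := Sbar ⊔ Submodule.span Fq {b} with hT₀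
    have hbK : b ∈ bmul Fq b (Subalgebra.toSubmodule (Algebra.adjoin Fq {μ})) :=
      Submodule.mem_map.mpr ⟨1, by simpa using (Algebra.adjoin Fq {μ}).one_mem, by simp⟩
    have hd0 : Disjoint Sbar (Submodule.span Fq {b}) :=
      hdisj.mono_right ((Submodule.span_singleton_le_iff_mem _ _).mpr hbK)
    have hfr : Module.finrank Fq ↥T₀ = l * t + 1 := by
      have h := Submodule.finrank_sup_add_finrank_inf_eq Sbar (Submodule.span Fq {b})
      rw [disjoint_iff.mp hd0, hSdim, finrank_span_singleton hb] at h
      simpa using h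
    haveI := Fintype.ofFinite Fqn
    have hcardT : Nat.card ↥T₀ = q ^ (l * t + 1) := by
      rw [Nat.card_eq_fintype_card, Module.card_eq_pow_finrank (K := Fq) (V := ↥T₀), hq, hfr]
    have hT0le : T₀ ≤ Sbar ⊔ bmul Fq b (pows Fq μ m) := by
      refine sup_le le_sup_left (le_trans ?_ le_sup_right)
      rw [Submodule.span_singleton_le_iff_mem]
      exact Submodule.mem_map.mpr ⟨1, Submodule.subset_span ⟨⟨0, hm⟩, by simp⟩, by simp⟩
    -- map `T₀` into `U₂ ∩ span {w}` via `x ↦ φ (x, 0)`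
    have hmemG : ∀ x : ↥T₀, φ ((x : Fqn), 0) ∈ (U₂ : Set (Fqn × Fqn)) ∩
        (Submodule.span Fqn {w} : Set (Fqn × Fqn)) := by
      intro x
      constructor
      · rw [← hf]
        refine ⟨((x : Fqn), 0), ?_, rfl⟩
        rw [hU₁]
        exact Submodule.mem_prod.mpr ⟨hT0le x.2, Submodule.zero_mem _⟩
      · have hx0 : ((x : Fqn), (0 : Fqn)) = (x : Fqn) • ((1 : Fqn), (0 : Fqn)) := by
          simp
        rw [hx0, hφsmul, hφ10]
        exact Submodule.smul_mem _ _ (Submodule.mem_span_singleton_self w)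
    set G : Set (Fqn × Fqn) :=
      (U₂ : Set (Fqn × Fqn)) ∩ (Submodule.span Fqn {w} : Set (Fqn × Fqn)) with hG
    have h1 : Nat.card ↥T₀ ≤ Nat.card ↥G := by
      refine Nat.card_le_card_of_injective
        (fun x : ↥T₀ => (⟨φ ((x : Fqn), 0), hmemG x⟩ : ↥G)) ?_
      intro a a' haa'
      have := hφinj (Subtype.ext_iff.mp haa')
      exact Subtype.ext (by simpa [Prod.ext_iff] using this)
    have h2 : Nat.card ↥G ≤ Nat.card ↥(pows Fq lam 2) := by
      have hmem2 : ∀ v : ↥G, (v : Fqn × Fqn).2 ∈ pows Fq lam 2 := by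
        intro v
        have hv1 : (v : Fqn × Fqn) ∈ U₂ := v.2.1
        rw [hU₂] at hv1
        exact (Submodule.mem_prod.mp hv1).2
      refine Nat.card_le_card_of_injective
        (fun v : ↥G => (⟨(v : Fqn × Fqn).2, hmem2 v⟩ : ↥(pows Fq lam 2))) ?_
      intro v v' hvv'
      obtain ⟨c, hc⟩ := Submodule.mem_span_singleton.mp v.2.2
      obtain ⟨c', hc'⟩ := Submodule.mem_span_singleton.mp v'.2.2
      have h2' : (v : Fqn × Fqn).2 = (v' : Fqn × Fqn).2 := Subtype.ext_iff.mp hvv'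
      rw [← hc, ← hc'] at h2'
      have hcc : c * w.2 = c' * w.2 := by simpa [Prod.smul_def, smul_eq_mul] using h2'
      have : c = c' := mul_right_cancel₀ hw2 hcc
      exact Subtype.ext (by rw [← hc, ← hc', this])
    have h3 : Nat.card ↥(pows Fq lam 2) ≤ q ^ 2 := by
      have := aux_card_pows_le (Fq := Fq) lam 2
      rwa [hq] at this
    have hfin : q ^ (l * t + 1) ≤ q ^ 2 := by
      rw [← hcardT]; exact le_trans h1 (le_trans h2 h3)
    have := (Nat.pow_le_pow_iff_right hq2).mp hfin
    omega
  -- Step 2: the second coordinate of `φ p` is `ρ p.2 * D`.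
  set D : Fqn := (f ((0 : Fqn), (1 : Fqn))).2 with hDdef
  have hφ2 : ∀ p : Fqn × Fqn, (φ p).2 = ρ p.2 * D := by
    intro p
    have hsplit : ((ρ p.1, ρ p.2) : Fqn × Fqn)
        = ρ p.1 • ((1 : Fqn), (0 : Fqn)) + ρ p.2 • ((0 : Fqn), (1 : Fqn)) := by
      simp [Prod.ext_iff]
    show (f (ρ p.1, ρ p.2)).2 = ρ p.2 * D
    rw [hsplit, map_add, map_smul, map_smul]
    simp [Prod.smul_def, smul_eq_mul, hw2, hDdef]
  -- Step 3: the second projection of `U₂` is `D · ρ(⟨1, μ⟩)`.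
  have hpr : ∀ z ∈ pows Fq lam 2, ∃ y ∈ pows Fq μ 2, ρ y * D = z := by
    intro z hz
    have h0 : ((0 : Fqn), z) ∈ (U₂ : Set (Fqn × Fqn)) := by
      rw [SetLike.mem_coe, hU₂]
      exact Submodule.mem_prod.mpr ⟨Submodule.zero_mem _, hz⟩
    rw [← hf] at h0
    obtain ⟨p, hp, hpz⟩ := h0
    refine ⟨p.2, ?_, ?_⟩
    · rw [SetLike.mem_coe, hU₁] at hp
      exact (Submodule.mem_prod.mp hp).2
    · have := hφ2 p
      rw [hpz] at this
      exact this.symm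
  have h1mem : (1 : Fqn) ∈ pows Fq lam 2 :=
    Submodule.subset_span ⟨⟨0, by omega⟩, by simp⟩
  have hlmem : lam ∈ pows Fq lam 2 :=
    Submodule.subset_span ⟨⟨1, by omega⟩, by simp⟩
  obtain ⟨c, hcmem, hc⟩ := hpr 1 h1mem
  obtain ⟨d, hdmem, hd⟩ := hpr lam hlmem
  have hc0 : c ≠ 0 := by
    rintro rfl
    rw [map_zero, zero_mul] at hc
    exact zero_ne_one hc
  have hρc : ρ c ≠ 0 := fun h => hc0 (ρ.injective (by rw [h, map_zero]))
  have hDinv : D = (ρ c)⁻¹ := by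
    field_simp
    linear_combination hc
  have hlam_eq : lam = ρ (d * c⁻¹) := by
    rw [map_mul, map_inv₀, ← hDinv, hd]
  -- Step 4: `d * c⁻¹` lies in the subfield `F_q(μ)`.
  set K : Subalgebra Fq Fqn := Algebra.adjoin Fq {μ} with hKdef
  have hμK : μ ∈ K := Algebra.subset_adjoin rfl
  have hpowsK : ∀ x ∈ pows Fq μ 2, x ∈ K := by
    intro x hx
    have hle : pows Fq μ 2 ≤ Subalgebra.toSubmodule K := by
      rw [pows, Submodule.span_le]
      rintro _ ⟨i, rfl⟩
      exact pow_mem hμK _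
    exact hle hx
  have hcK : c ∈ K := hpowsK c hcmem
  have hdK : d ∈ K := hpowsK d hdmem
  haveI := Fintype.ofFinite Fqn
  have hcinvK : c⁻¹ ∈ K := by
    have hN : 2 ≤ Fintype.card Fqn := Fintype.one_lt_card
    have hinv : c⁻¹ = c ^ (Fintype.card Fqn - 2) := by
      refine inv_eq_of_mul_eq_one_right ?_
      rw [← pow_succ' c]
      have h21 : Fintype.card Fqn - 2 + 1 = Fintype.card Fqn - 1 := by omega
      rw [h21, FiniteField.pow_card_sub_one_eq_one c hc0]
    rw [hinv]
    exact pow_mem hcK _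
  have heK : d * c⁻¹ ∈ K := mul_mem hdK hcinvK
  -- Step 5: `E := ρ(K)` is an `F_q`-subalgebra containing `lam`.
  have hfix := aux_range_eq (Fq := Fq) (Fqn := Fqn) q hq
  have hρrange : ∀ r : Fq, ρ.symm (algebraMap Fq Fqn r) ∈ K := by
    intro r
    have h1 : (algebraMap Fq Fqn r) ^ q = algebraMap Fq Fqn r := by
      have hmem : algebraMap Fq Fqn r ∈ Set.range (algebraMap Fq Fqn) := ⟨r, rfl⟩
      rw [← hfix] at hmem
      exact hmem
    have h2 : (ρ.symm (algebraMap Fq Fqn r)) ^ q = ρ.symm (algebraMap Fq Fqn r) := by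
      rw [← map_pow, h1]
    have h3 : ρ.symm (algebraMap Fq Fqn r) ∈ Set.range (algebraMap Fq Fqn) := by
      rw [← hfix]; exact h2
    obtain ⟨a, ha⟩ := h3
    rw [← ha]
    exact K.algebraMap_mem a
  set E : Subalgebra Fq Fqn :=
    { carrier := ρ '' (K : Set Fqn)
      mul_mem' := by
        rintro x y ⟨a, ha, rfl⟩ ⟨a', ha', rfl⟩
        exact ⟨a * a', mul_mem ha ha', map_mul ρ a a'⟩
      one_mem' := ⟨1, one_mem K, map_one ρ⟩
      add_mem' := by
        rintro x y ⟨a, ha, rfl⟩ ⟨a', ha', rfl⟩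
        exact ⟨a + a', add_mem ha ha', map_add ρ a a'⟩
      zero_mem' := ⟨0, zero_mem K, map_zero ρ⟩
      algebraMap_mem' := fun r =>
        ⟨ρ.symm (algebraMap Fq Fqn r), hρrange r, ρ.apply_symm_apply _⟩ } with hEdef
  have hlamE : lam ∈ E := ⟨d * c⁻¹, heK, hlam_eq.symm⟩
  have hadj : Algebra.adjoin Fq {lam} ≤ E :=
    Algebra.adjoin_le (Set.singleton_subset_iff.mpr hlamE)
  -- Step 6: cardinality contradiction.
  have hcard1 : Nat.card ↥(Algebra.adjoin Fq {lam}) = q ^ s := by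
    rw [Nat.card_eq_fintype_card, Module.card_eq_pow_finrank (K := Fq), hq, hs]
  have hcard2 : Nat.card ↥K = q ^ t := by
    rw [Nat.card_eq_fintype_card, Module.card_eq_pow_finrank (K := Fq), hq, hKdef, hμt]
  have hEK : Nat.card ↥E = Nat.card ↥K := by
    refine (Nat.card_eq_of_bijective
      (fun x : ↥K => (⟨ρ x, ⟨(x : Fqn), x.2, rfl⟩⟩ : ↥E)) ⟨?_, ?_⟩).symm
    · intro a a' haa'
      exact Subtype.ext (ρ.injective (Subtype.ext_iff.mp haa'))
    · rintro ⟨y, a, ha, hae⟩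
      exact ⟨⟨a, ha⟩, Subtype.ext hae⟩
  have hmono : Nat.card ↥(Algebra.adjoin Fq {lam}) ≤ Nat.card ↥E :=
    Nat.card_le_card_of_injective _ (Subalgebra.inclusion_injective hadj)
  have hqst : q ^ s ≤ q ^ t := by
    rw [← hcard1, ← hcard2, ← hEK]
    exact hmono
  have hst : s ≤ t := (Nat.pow_le_pow_iff_right hq2).mp hqst
  omega
end

section
/- Let k, r be integers with 2 ≤ 2r ≤ k ≤ n + r, let S and T be 𝔽_q-subspaces of 𝔽_{q^n} with dim_{𝔽_q}(S) = n − k + r and dim_{𝔽_q}(T) = r, and let U = S^⊥ × T ⊆ 𝔽_{q^n}². Then (S, T) is a critical pair, i.e., dim_{𝔽_q}(⟨ST⟩_{𝔽_q}) = n − k + 2r − 1, if and only if the number of points of weight r in L_U different from ⟨(1,0)⟩_{𝔽_{q^n}} is exactly q^{k−2r+1}. -/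
open Submodule

open Pointwise

/-- The orthogonal complement with respect to the trace bilinear form. -/
noncomputable def perp (Fq : Type*) {Fqn : Type*} [Field Fq] [Field Fqn] [Algebra Fq Fqn]
    (S : Submodule Fq Fqn) : Submodule Fq Fqn where
  carrier := {a | ∀ b ∈ S, Algebra.trace Fq Fqn (a * b) = 0}
  add_mem' := by
    intro a a' ha ha' b hb
    rw [add_mul, map_add, ha b hb, ha' b hb, add_zero]
  zero_mem' := by
    intro b hb
    rw [zero_mul, map_zero]
  smul_mem' := by
    intro c a ha b hb
    rw [smul_mul_assoc, map_smul, ha b hb, smul_zero]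

/-!
Every point of `PG(1, q^n)` other than `⟨(1,0)⟩` is `⟨(a,1)⟩` for a unique `a`, and its weight
in `L_U` is `dim {t ∈ T : a t ∈ S^⊥}`. This equals `dim T = r` exactly when `a T ⊆ S^⊥`, that is,
when `a ∈ ⟨ST⟩^⊥` for the trace form. The trace form is nondegenerate, so there are
`q^(n - dim ⟨ST⟩)` such points, and the equivalence follows by comparing exponents.
-/

section TracePerp

variable {Fq Fqn : Type*} [Field Fq] [Field Fqn] [Algebra Fq Fqn]

lemma mem_perp_iff_le_ker {X : Submodule Fq Fqn} {a : Fqn} :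
    a ∈ perp Fq X ↔ X ≤ LinearMap.ker (Algebra.traceForm Fq Fqn a) := by
  simp [perp, SetLike.le_def, Algebra.traceForm_apply]

lemma perp_eq_traceForm_orthogonal (X : Submodule Fq Fqn) :
    perp Fq X = (Algebra.traceForm Fq Fqn).orthogonal X := by
  ext a
  simp only [LinearMap.BilinForm.mem_orthogonal_iff, Algebra.traceForm_apply, mul_comm _ a]
  rfl

lemma finrank_perp [FiniteDimensional Fq Fqn] [Algebra.IsSeparable Fq Fqn]
    (X : Submodule Fq Fqn) :
    Module.finrank Fq (perp Fq X) = Module.finrank Fq Fqn - Module.finrank Fq X := by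
  rw [perp_eq_traceForm_orthogonal,
    LinearMap.BilinForm.finrank_orthogonal (traceForm_nondegenerate Fq Fqn)]

lemma mem_perp_span_mul_iff {S T : Submodule Fq Fqn} {a : Fqn} :
    a ∈ perp Fq (span Fq ((S : Set Fqn) * (T : Set Fqn))) ↔
      T ≤ (perp Fq S).comap (LinearMap.mulLeft Fq a) := by
  rw [mem_perp_iff_le_ker, span_le, Set.mul_subset_iff]
  simp only [SetLike.le_def, SetLike.mem_coe, LinearMap.mem_ker, mem_comap,
    LinearMap.mulLeft_apply, Algebra.traceForm_apply]
  exact ⟨fun h t ht s hs => by simpa [mul_assoc, mul_comm t] using h s hs t ht,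
    fun h s hs t ht => by simpa [mul_assoc, mul_comm t] using h ht s hs⟩

end TracePerp

section ProjectivePoints

variable {K : Type*} [Field K]

lemma span_pair_eq_span_div_one {x y : K} (hy : y ≠ 0) :
    span K {(x, y)} = span K {(x / y, (1 : K))} := by
  rw [← span_singleton_smul_eq (isUnit_iff_ne_zero.mpr hy) (x / y, (1 : K))]
  simp only [Prod.smul_mk, smul_eq_mul, mul_one, mul_div_cancel₀ x hy]

lemma span_pair_zero_eq {x : K} (hx : x ≠ 0) :
    span K {(x, (0 : K))} = span K {((1 : K), (0 : K))} := by
  rw [← span_singleton_smul_eq (isUnit_iff_ne_zero.mpr hx) ((1 : K), (0 : K))]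
  simp

lemma span_pair_one_injective :
    Function.Injective fun a : K => span K {(a, (1 : K))} := by
  intro a b (h : span K {(a, (1 : K))} = span K {(b, (1 : K))})
  obtain ⟨c, hc⟩ := mem_span_singleton.mp (h ▸ mem_span_singleton_self (a, (1 : K)))
  simp only [Prod.smul_mk, smul_eq_mul, mul_one, Prod.mk.injEq] at hc
  rw [← hc.1, hc.2, one_mul]

lemma span_pair_one_ne (a : K) :
    span K {(a, (1 : K))} ≠ span K {((1 : K), (0 : K))} := by
  intro h
  obtain ⟨c, hc⟩ := mem_span_singleton.mp (h ▸ mem_span_singleton_self (a, (1 : K)))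
  simpa using congrArg Prod.snd hc

end ProjectivePoints

section LinearSets

variable {Fq Fqn : Type*} [Field Fq] [Field Fqn] [Algebra Fq Fqn]

lemma span_mem_linSet_of_weight_ne_zero {U : Submodule Fq (Fqn × Fqn)} {v : Fqn × Fqn}
    (hw : weight U (span Fqn {v}) ≠ 0) : span Fqn {v} ∈ linSet U := by
  obtain ⟨w, hw, hw0⟩ := (Submodule.ne_bot_iff (U ⊓ (span Fqn {v}).restrictScalars Fq)).mp
    fun h => hw (by rw [weight, h, finrank_bot])
  obtain ⟨hwU, hwv⟩ := mem_inf.mp hw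
  obtain ⟨c, rfl⟩ := mem_span_singleton.mp ((restrictScalars_mem Fq _ _).mp hwv)
  have hc : c ≠ 0 := by rintro rfl; simp at hw0
  exact ⟨c • v, hw0, hwU, (span_singleton_smul_eq (isUnit_iff_ne_zero.mpr hc) v).symm⟩

lemma setOf_weight_eq_ne_eq_image (U : Submodule Fq (Fqn × Fqn)) {r : ℕ} (hr : r ≠ 0) :
    {P | P ∈ linSet U ∧ weight U P = r ∧ P ≠ span Fqn {((1 : Fqn), (0 : Fqn))}} =
      (fun a : Fqn => span Fqn {(a, (1 : Fqn))}) ''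
        {a | weight U (span Fqn {(a, (1 : Fqn))}) = r} := by
  ext P
  constructor
  · rintro ⟨⟨⟨x, y⟩, hv0, -, rfl⟩, hw, hne⟩
    by_cases hy : y = 0
    · subst hy
      exact absurd (span_pair_zero_eq fun hx => hv0 (by simp [hx])) hne
    · rw [span_pair_eq_span_div_one hy] at hw ⊢
      exact ⟨x / y, hw, rfl⟩
  · rintro ⟨a, hw, rfl⟩
    exact ⟨span_mem_linSet_of_weight_ne_zero (hw ▸ hr), hw, span_pair_one_ne a⟩

lemma weight_prod_span_pair_one (X T : Submodule Fq Fqn) (a : Fqn) :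
    weight (X.prod T) (span Fqn {(a, (1 : Fqn))}) =
      Module.finrank Fq ↥(T ⊓ X.comap (LinearMap.mulLeft Fq a)) := by
  let f : Fqn →ₗ[Fq] Fqn × Fqn := (LinearMap.mulLeft Fq a).prod LinearMap.id
  have hf : Function.Injective f := fun x y h => congrArg Prod.snd h
  have himage : X.prod T ⊓ (span Fqn {(a, (1 : Fqn))}).restrictScalars Fq =
      (T ⊓ X.comap (LinearMap.mulLeft Fq a)).map f := by
    ext ⟨x, y⟩
    simp only [mem_inf, mem_prod, restrictScalars_mem, mem_map, mem_comap,
      mem_span_singleton, Prod.smul_mk, smul_eq_mul, mul_one, Prod.mk.injEq, f,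
      LinearMap.prod_apply, Function.prod, LinearMap.mulLeft_apply, LinearMap.id_apply]
    constructor
    · rintro ⟨⟨hx, hy⟩, c, rfl, rfl⟩
      exact ⟨c, ⟨hy, mul_comm a c ▸ hx⟩, mul_comm a c, rfl⟩
    · rintro ⟨t, ⟨ht, hat⟩, rfl, rfl⟩
      exact ⟨⟨hat, ht⟩, t, mul_comm t a, rfl⟩
  rw [weight, himage]
  exact (equivMapOfInjective f hf _).finrank_eq.symm

lemma weight_prod_span_pair_one_eq_finrank_iff (X T : Submodule Fq Fqn)
    [FiniteDimensional Fq T] (a : Fqn) :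
    weight (X.prod T) (span Fqn {(a, (1 : Fqn))}) = Module.finrank Fq T ↔
      T ≤ X.comap (LinearMap.mulLeft Fq a) := by
  rw [weight_prod_span_pair_one]
  refine ⟨fun h => ?_, fun h => by rw [inf_eq_left.mpr h]⟩
  rw [← eq_of_le_of_finrank_eq inf_le_left h]
  exact inf_le_right

end LinearSets

lemma ncard_weight_eq_finrank_prod_perp {Fq Fqn : Type*} [Field Fq] [Field Fqn] [Algebra Fq Fqn]
    [Fintype Fq] [FiniteDimensional Fq Fqn] (S T : Submodule Fq Fqn) (hT : T ≠ ⊥) :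
    Set.ncard {P | P ∈ linSet ((perp Fq S).prod T) ∧
        weight ((perp Fq S).prod T) P = Module.finrank Fq T ∧
        P ≠ span Fqn {((1 : Fqn), (0 : Fqn))}} =
      Fintype.card Fq ^ (Module.finrank Fq Fqn -
        Module.finrank Fq ↥(span Fq ((S : Set Fqn) * (T : Set Fqn)))) := by
  have hset : {a | weight ((perp Fq S).prod T) (span Fqn {(a, (1 : Fqn))}) =
      Module.finrank Fq T} = perp Fq (span Fq ((S : Set Fqn) * (T : Set Fqn))) := by
    ext a
    exact (weight_prod_span_pair_one_eq_finrank_iff _ _ a).trans mem_perp_span_mul_iff.symm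
  rw [setOf_weight_eq_ne_eq_image _ (Submodule.finrank_eq_zero.not.mpr hT),
    Set.ncard_image_of_injective _ span_pair_one_injective, hset, ← Nat.card_coe_set_eq,
    SetLike.coe_sort_coe, Module.natCard_eq_pow_finrank (K := Fq), finrank_perp,
    Nat.card_eq_fintype_card]

theorem stmt19_general (Fq Fqn : Type*) [Field Fq] [Field Fqn] [Algebra Fq Fqn] [Fintype Fq]
    (q n : ℕ) (hq : Fintype.card Fq = q) (hn : Module.finrank Fq Fqn = n)
    (k r : ℕ) (hr : 1 ≤ r) (hrk : 2 * r ≤ k) (hkn : k ≤ n + r)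
    (S : Submodule Fq Fqn)
    (T : Submodule Fq Fqn) (hT : Module.finrank Fq ↥T = r)
    (U : Submodule Fq (Fqn × Fqn)) (hU : U = (perp Fq S).prod T) :
    Module.finrank Fq ↥(Submodule.span Fq ((S : Set Fqn) * (T : Set Fqn))) + k + 1
        = n + 2 * r ↔
      Set.ncard
          {P | P ∈ linSet U ∧ weight U P = r ∧
            P ≠ Submodule.span Fqn {((1 : Fqn), (0 : Fqn))}}
        = q ^ (k - 2 * r + 1) := by
  subst hU hq hT
  -- `finrank` is `0` on infinite-dimensional spaces; the bounds give `1 ≤ r ≤ n`.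
  have : FiniteDimensional Fq Fqn := FiniteDimensional.of_finrank_pos (by omega)
  have hT0 : T ≠ ⊥ := fun h => by simp [h] at hr
  rw [ncard_weight_eq_finrank_prod_perp S T hT0, hn]
  have hdim := hn ▸ Submodule.finrank_le (span Fq ((S : Set Fqn) * (T : Set Fqn)))
  refine ⟨fun h => by congr 1; omega, fun h => ?_⟩
  have := Nat.pow_right_injective Fintype.one_lt_card h
  omega

/-- Let `2 ≤ 2r ≤ k ≤ n + r`, `S` and `T` `F_q`-subspaces of `F_{q^n}`
of dimensions `n - k + r` and `r`, and `U = S^⊥ × T`. Then `(S,T)` is a critical pair,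
i.e. `dim_{F_q}⟨ST⟩_{F_q} = n - k + 2r - 1` (stated as `dim + k + 1 = n + 2r`), iff the
number of points of weight `r` in `L_U` different from `⟨(1,0)⟩` is exactly
`q^{k-2r+1}`. -/
theorem stmt19 (Fq Fqn : Type*) [Field Fq] [Field Fqn] [Algebra Fq Fqn] [Fintype Fq]
    (q n : ℕ) (hq : Fintype.card Fq = q) (hn : Module.finrank Fq Fqn = n)
    (k r : ℕ) (hr : 1 ≤ r) (hrk : 2 * r ≤ k) (hkn : k ≤ n + r)
    (S : Submodule Fq Fqn) (hS : Module.finrank Fq ↥S = n + r - k)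
    (T : Submodule Fq Fqn) (hT : Module.finrank Fq ↥T = r)
    (U : Submodule Fq (Fqn × Fqn)) (hU : U = (perp Fq S).prod T) :
    Module.finrank Fq ↥(Submodule.span Fq ((S : Set Fqn) * (T : Set Fqn))) + k + 1
        = n + 2 * r ↔
      Set.ncard
          {P | P ∈ linSet U ∧ weight U P = r ∧
            P ≠ Submodule.span Fqn {((1 : Fqn), (0 : Fqn))}}
        = q ^ (k - 2 * r + 1) :=
  stmt19_general Fq Fqn q n hq hn k r hr hrk hkn S T hT U hU
end
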